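/- arXiv:2411.15905 — 6 statements merged into one kernel-verified Lean document; each statement's English description precedes it below -/
import Mathlib

section
/- For every k ≥ 0 and every 0 ≤ l ≤ k, the l-th Cauchy-product coefficient of L(ε)·p_k(ε) equals S_{l+1}, where p_k(ε) := I_B + ε·M_{k,k+1} + ⋯ + ε^k·M_{1,k+1}; that is, writing p_0 := I_B and p_j := M_{k+1−j,k+1} for 1 ≤ j ≤ k, one has Σ_{i+j=l} L_i∘p_j = S_{l+1} for all 0 ≤ l ≤ k. Moreover, for every 1 ≤ i ≤ k+1: S_i maps N_0^c + ⋯ + N_{i−1}^c into R_{i−1}^c (where N_0^c := {0}), S_i(N_i^c) = R_i, and S_i vanishes on N_i. -/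
section Aux
variable {R : Type*} [CommRing R] {M₁ M₂ M₃ : Type*} [AddCommGroup M₁] [AddCommGroup M₂]
  [AddCommGroup M₃] [Module R M₁] [Module R M₂] [Module R M₃]

private lemma lm_sum_comp (s : Finset ℕ) (f : ℕ → M₂ →ₗ[R] M₃) (g : M₁ →ₗ[R] M₂) :
    (∑ i ∈ s, f i).comp g = ∑ i ∈ s, (f i).comp g := by
  ext x; simp [LinearMap.coe_sum, Finset.sum_apply]

private lemma lm_comp_sum (s : Finset ℕ) (g : M₂ →ₗ[R] M₃) (f : ℕ → M₁ →ₗ[R] M₂) :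
    g.comp (∑ i ∈ s, f i) = ∑ i ∈ s, g.comp (f i) := by
  ext x; simp [LinearMap.coe_sum, Finset.sum_apply, map_sum]

private lemma sum_Icc_succ_bot {M₀ : Type*} [AddCommMonoid M₀] {a b : ℕ} (h : a ≤ b)
    (f : ℕ → M₀) :
    ∑ v ∈ Finset.Icc a b, f v = f a + ∑ v ∈ Finset.Icc (a + 1) b, f v := by
  rw [Finset.Icc_add_one_left_eq_Ioc, ← Finset.Icc_erase_left]
  exact (Finset.add_sum_erase _ _ (Finset.mem_Icc.mpr ⟨le_rfl, h⟩)).symm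

end Aux

theorem stmt_0
    {𝕂 : Type*} [RCLike 𝕂]
    {B B' : Type*} [AddCommGroup B] [Module 𝕂 B]
    [AddCommGroup B'] [Module 𝕂 B']
    (L : ℕ → B →ₗ[𝕂] B')
    (Sb S : ℕ → B →ₗ[𝕂] B')
    (N Nc : ℕ → Submodule 𝕂 B)
    (R Rc : ℕ → Submodule 𝕂 B')
    (P : ℕ → B' →ₗ[𝕂] B')
    (T : ℕ → B' →ₗ[𝕂] B)
    (E M : ℕ → ℕ → B →ₗ[𝕂] B)
    (hL : ∃ i, L i ≠ 0)
    (hN0 : N 0 = ⊤) (hRc0 : Rc 0 = ⊤)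
    (hSb1 : Sb 1 = L 0)
    (hSbrec : ∀ k, 1 ≤ k → Sb (k + 1) = ∑ i ∈ Finset.Icc 1 k, (L i).comp (M i k))
    (hSdef : ∀ k, S (k + 1) = Sb (k + 1) - ∑ i ∈ Finset.Icc 1 k, (P i).comp (Sb (k + 1)))
    (hNdef : ∀ k, N (k + 1) = LinearMap.ker (S (k + 1)) ⊓ N k)
    (hRdef : ∀ k, R (k + 1) = Submodule.map (S (k + 1)) (N k))
    (hNcompl : ∀ k, Disjoint (Nc (k + 1)) (N (k + 1)) ∧ Nc (k + 1) ⊔ N (k + 1) = N k)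
    (hRcompl : ∀ k, Disjoint (R (k + 1)) (Rc (k + 1)) ∧ R (k + 1) ⊔ Rc (k + 1) = Rc k)
    (hPrange : ∀ i, 1 ≤ i → LinearMap.range (P i) ≤ R i)
    (hPid : ∀ i, 1 ≤ i → ∀ y ∈ R i, P i y = y)
    (hPzeroRc : ∀ i, 1 ≤ i → ∀ y ∈ Rc i, P i y = 0)
    (hPzeroR : ∀ i j, 1 ≤ j → j < i → ∀ y ∈ R j, P i y = 0)
    (hTrange : ∀ i, 1 ≤ i → ∀ y, T i y ∈ Nc i)
    (hTS : ∀ i, 1 ≤ i → ∀ x ∈ Nc i, T i (S i x) = x)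
    (hST : ∀ i, 1 ≤ i → ∀ y, S i (T i y) = P i y)
    (hE11 : E 1 1 = LinearMap.id)
    (hEdiag : ∀ k, E (k + 1) (k + 1) = LinearMap.id)
    (hErec : ∀ k i, 1 ≤ i → i ≤ k →
      E i (k + 1) = -((T i).comp (∑ v ∈ Finset.Icc (i + 1) (k + 1), (Sb v).comp (E v (k + 1)))))
    (hM11 : M 1 1 = LinearMap.id)
    (hM1 : ∀ k, 1 ≤ k → M 1 (k + 1) = E 1 (k + 1))
    (hMrec : ∀ k a, 2 ≤ a → a ≤ k + 1 →
      M a (k + 1) = ∑ b ∈ Finset.Icc (a - 1) k, (M (a - 1) b).comp (E (b + 1) (k + 1)))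
    (k : ℕ)
    (p : ℕ → B →ₗ[𝕂] B)
    (hp0 : p 0 = LinearMap.id)
    (hp : ∀ j, 1 ≤ j → j ≤ k → p j = M (k + 1 - j) (k + 1)) :
    (∀ l, l ≤ k → ∑ i ∈ Finset.range (l + 1), (L i).comp (p (l - i)) = S (l + 1)) ∧
    (∀ i, 1 ≤ i → i ≤ k + 1 →
      Submodule.map (S i) (⨆ j ∈ Finset.Icc 1 (i - 1), Nc j) ≤ Rc (i - 1) ∧
      Submodule.map (S i) (Nc i) = R i ∧
      ∀ x ∈ N i, S i x = 0) := by
  classical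
  have hS1 : S 1 = Sb 1 := by simpa using hSdef 0
  have Nsucc : ∀ m, N (m + 1) ≤ N m := fun m => (hNdef m) ▸ inf_le_right
  have Nmono : ∀ a b : ℕ, a ≤ b → N b ≤ N a := by
    intro a b hab
    induction b, hab using Nat.le_induction with
    | base => exact le_rfl
    | succ b hb ih => exact (Nsucc b).trans ih
  have SzeroN : ∀ i, 1 ≤ i → ∀ x ∈ N i, S i x = 0 := by
    intro i hi x hx
    obtain ⟨m, rfl⟩ : ∃ m, i = m + 1 := ⟨i - 1, by omega⟩
    rw [hNdef m] at hx
    exact LinearMap.mem_ker.mp hx.1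
  have NcleN : ∀ m, Nc (m + 1) ≤ N m := fun m => (hNcompl m).2 ▸ le_sup_left
  have Erange : ∀ n v, 1 ≤ v → v ≤ n → ∀ x, E v (n + 1) x ∈ Nc v := by
    intro n v h1 h2 x
    rw [hErec n v h1 h2]
    simp only [LinearMap.neg_apply, LinearMap.comp_apply]
    exact (Nc v).neg_mem (hTrange v h1 _)
  have SE0 : ∀ n w v, 1 ≤ w → w < v → v ≤ n → (S w).comp (E v (n + 1)) = 0 := by
    intro n w v h1 h2 h3
    ext x
    have hmem : E v (n + 1) x ∈ N w := by
      have h4 : E v (n + 1) x ∈ Nc v := Erange n v (by omega) h3 x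
      obtain ⟨m, rfl⟩ : ∃ m, v = m + 1 := ⟨v - 1, by omega⟩
      exact ((NcleN m).trans (Nmono w m (by omega))) h4
    simpa using SzeroN w h1 _ hmem
  have Mdiag : ∀ a, 1 ≤ a → M a a = LinearMap.id := by
    intro a h1
    induction a with
    | zero => omega
    | succ a ih =>
      rcases Nat.eq_or_lt_of_le h1 with h | h
      · have : a = 0 := by omega
        subst this; exact hM11
      · have ha : 1 ≤ a := by omega
        rw [hMrec a (a + 1) (by omega) le_rfl]
        simp [Finset.Icc_self, ih ha, hEdiag a]
  have RcP : ∀ m (y : B'), y - ∑ v ∈ Finset.Icc 1 m, P v y ∈ Rc m := by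
    intro m
    induction m with
    | zero => intro y; simp [hRc0]
    | succ m ih =>
      intro y
      have hz := ih y
      rw [← (hRcompl m).2] at hz
      obtain ⟨r, hr, rc, hrc, hsum⟩ := Submodule.mem_sup.mp hz
      have hPz : P (m + 1) (y - ∑ v ∈ Finset.Icc 1 m, P v y) = r := by
        rw [← hsum, map_add, hPid (m + 1) (by omega) r hr,
          hPzeroRc (m + 1) (by omega) rc hrc, add_zero]
      have hPy : P (m + 1) y = r := by
        have h0 : P (m + 1) (∑ v ∈ Finset.Icc 1 m, P v y) = 0 := by
          rw [map_sum]
          apply Finset.sum_eq_zero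
          intro v hv
          have hv1 : 1 ≤ v := (Finset.mem_Icc.mp hv).1
          have hv2 : v ≤ m := (Finset.mem_Icc.mp hv).2
          exact hPzeroR (m + 1) v hv1 (by omega) _ (hPrange v hv1 ⟨y, rfl⟩)
        rw [map_sub, h0, sub_zero] at hPz
        exact hPz
      rw [Finset.sum_Icc_succ_top (by omega)]
      have hrc' : y - (∑ v ∈ Finset.Icc 1 m, P v y + P (m + 1) y) = rc := by
        rw [hPy]
        have h2 : rc = y - ∑ v ∈ Finset.Icc 1 m, P v y - r := by rw [← hsum]; abel
        rw [h2]; abel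
      rw [hrc']; exact hrc
  have Srange : ∀ m (x : B), S (m + 1) x ∈ Rc m := by
    intro m x
    have heq : S (m + 1) x = Sb (m + 1) x - ∑ v ∈ Finset.Icc 1 m, P v (Sb (m + 1) x) := by
      rw [hSdef m]
      simp [LinearMap.sub_apply, LinearMap.coe_sum, Finset.sum_apply]
    rw [heq]; exact RcP m (Sb (m + 1) x)
  -- pointwise version of hSdef
  have hSpt : ∀ m (z : B), S (m + 1) z = Sb (m + 1) z - ∑ w ∈ Finset.Icc 1 m, P w (Sb (m + 1) z) := by
    intro m z
    rw [hSdef m]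
    simp [LinearMap.sub_apply, LinearMap.coe_sum, Finset.sum_apply]
  have claimA : ∀ l : ℕ, ∀ i ≤ l,
      (∑ v ∈ Finset.Icc 1 (l + 1), (Sb v).comp (E v (l + 1))) =
      (LinearMap.id - ∑ w ∈ Finset.Icc 1 i, P w).comp
        (∑ v ∈ Finset.Icc (i + 1) (l + 1), (Sb v).comp (E v (l + 1))) := by
    intro l i hil
    induction i with
    | zero => simp
    | succ i ih =>
      have hi : i ≤ l := by omega
      rw [ih hi]
      have hsplit : (∑ v ∈ Finset.Icc (i + 1) (l + 1), (Sb v).comp (E v (l + 1))) =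
          (Sb (i + 1)).comp (E (i + 1) (l + 1)) +
            ∑ v ∈ Finset.Icc (i + 2) (l + 1), (Sb v).comp (E v (l + 1)) :=
        sum_Icc_succ_bot (by omega) _
      rw [hsplit, hErec l (i + 1) (by omega) (by omega)]
      ext x
      set q : B' := (∑ v ∈ Finset.Icc (i + 2) (l + 1), (Sb v).comp (E v (l + 1))) x with hq
      have key : Sb (i + 1) (T (i + 1) q) -
          ∑ w ∈ Finset.Icc 1 i, P w (Sb (i + 1) (T (i + 1) q)) = P (i + 1) q := by
        rw [← hSpt i, hST (i + 1) (by omega)]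
      simp only [LinearMap.comp_apply, LinearMap.sub_apply, LinearMap.add_apply,
        LinearMap.id_apply, LinearMap.neg_apply, LinearMap.coe_sum, Finset.sum_apply,
        map_add, map_neg, map_sub, ← hq]
      rw [Finset.sum_Icc_succ_top (show 1 ≤ i + 1 by omega), key]
      abel
  have main : ∀ n l : ℕ, l + 1 ≤ n →
      (∑ i ∈ Finset.range (l + 1), (L i).comp (M (n - l + i) n)) = S (l + 1) := by
    intro n
    induction n using Nat.strong_induction_on with
    | _ n IH =>
      intro l hl
      obtain ⟨m, rfl⟩ : ∃ m, n = m + 1 := ⟨n - 1, by omega⟩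
      rcases Nat.lt_or_ge l m with hlm | hlm
      · -- case l < m
        have hstep : ∀ i ∈ Finset.range (l + 1), (L i).comp (M (m + 1 - l + i) (m + 1)) =
            ∑ b ∈ Finset.Icc (m - l + i) m,
              (L i).comp ((M (m - l + i) b).comp (E (b + 1) (m + 1))) := by
          intro i hi
          have hi' : i ≤ l := by
            have := Finset.mem_range.mp hi; omega
          rw [hMrec m (m + 1 - l + i) (by omega) (by omega),
            show m + 1 - l + i - 1 = m - l + i from by omega, lm_comp_sum]
        rw [Finset.sum_congr rfl hstep]
        rw [Finset.sum_comm' (s' := fun b => Finset.range (b + l - m + 1))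
          (t' := Finset.Icc (m - l) m)
          (by intro x y; simp only [Finset.mem_range, Finset.mem_Icc]; omega)]
        have hinner : ∀ b ∈ Finset.Icc (m - l) m,
            (∑ i ∈ Finset.range (b + l - m + 1),
              (L i).comp ((M (m - l + i) b).comp (E (b + 1) (m + 1)))) =
            (S (b + l - m + 1)).comp (E (b + 1) (m + 1)) := by
          intro b hb
          have hb1 := Finset.mem_Icc.mp hb
          have hIH := IH b (by omega) (b + l - m) (by omega)
          calc (∑ i ∈ Finset.range (b + l - m + 1),
              (L i).comp ((M (m - l + i) b).comp (E (b + 1) (m + 1))))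
              = (∑ i ∈ Finset.range (b + l - m + 1),
                (L i).comp (M (b - (b + l - m) + i) b)).comp (E (b + 1) (m + 1)) := by
                rw [lm_sum_comp]
                apply Finset.sum_congr rfl
                intro i hi
                rw [show b - (b + l - m) + i = m - l + i from by omega, LinearMap.comp_assoc]
            _ = (S (b + l - m + 1)).comp (E (b + 1) (m + 1)) := by rw [hIH]
        rw [Finset.sum_congr rfl hinner]
        rw [Finset.sum_eq_single m
          (fun b hb hbne => by
            have hb1 := Finset.mem_Icc.mp hb
            exact SE0 m (b + l - m + 1) (b + 1) (by omega) (by omega) (by omega))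
          (fun h => absurd (Finset.mem_Icc.mpr ⟨by omega, le_rfl⟩) h)]
        rw [show m + l - m + 1 = l + 1 from by omega, hEdiag m, LinearMap.comp_id]
      · -- case l = m
        have hlm' : l = m := by omega
        subst hlm'
        rcases Nat.eq_zero_or_pos l with rfl | hm1
        · simp [hM11, hS1, hSb1]
        · have key : (∑ i ∈ Finset.range (l + 1), (L i).comp (M (l + 1 - l + i) (l + 1))) =
              ∑ v ∈ Finset.Icc 1 (l + 1), (Sb v).comp (E v (l + 1)) := by
            rw [Finset.sum_range_succ']
            have h0 : (L 0).comp (M (l + 1 - l + 0) (l + 1)) = (Sb 1).comp (E 1 (l + 1)) := by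
              rw [show l + 1 - l + 0 = 1 from by omega, hM1 l hm1, hSb1]
            rw [h0]
            have hstep : ∀ i ∈ Finset.range l,
                (L (i + 1)).comp (M (l + 1 - l + (i + 1)) (l + 1)) =
                ∑ b ∈ Finset.Icc (i + 1) l,
                  ((L (i + 1)).comp (M (i + 1) b)).comp (E (b + 1) (l + 1)) := by
              intro i hi
              have hi' : i < l := Finset.mem_range.mp hi
              rw [show l + 1 - l + (i + 1) = i + 2 from by omega,
                hMrec l (i + 2) (by omega) (by omega),
                show i + 2 - 1 = i + 1 from by omega, lm_comp_sum]
              apply Finset.sum_congr rfl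
              intro b hb
              rw [LinearMap.comp_assoc]
            rw [Finset.sum_congr rfl hstep]
            rw [Finset.sum_comm' (s' := fun b => Finset.range b) (t' := Finset.Icc 1 l)
              (by intro x y; simp only [Finset.mem_range, Finset.mem_Icc]; omega)]
            have hinner : ∀ b ∈ Finset.Icc 1 l,
                (∑ i ∈ Finset.range b,
                  ((L (i + 1)).comp (M (i + 1) b)).comp (E (b + 1) (l + 1))) =
                (Sb (b + 1)).comp (E (b + 1) (l + 1)) := by
              intro b hb
              have hb1 := Finset.mem_Icc.mp hb
              rw [← lm_sum_comp]
              congr 1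
              rw [hSbrec b hb1.1, show Finset.Icc 1 b = Finset.Ico 1 (b + 1) from
                (Finset.Ico_add_one_right_eq_Icc 1 b).symm, Finset.sum_Ico_eq_sum_range]
              apply Finset.sum_congr (by simp)
              intro i hi
              rw [Nat.add_comm 1 i]
            rw [Finset.sum_congr rfl hinner]
            -- now: Σ_{b ∈ Icc 1 l} SbE (b+1) + SbE 1 = Σ_{v ∈ Icc 1 (l+1)} SbE v
            rw [sum_Icc_succ_bot (show 1 ≤ l + 1 by omega)
              (fun v => (Sb v).comp (E v (l + 1))), add_comm]
            congr 1
            rw [show Finset.Icc (1 + 1) (l + 1) = Finset.Ico 2 (l + 2) from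
              (Finset.Ico_add_one_right_eq_Icc 2 (l + 1)).symm, Finset.sum_Ico_eq_sum_range]
            rw [show Finset.Icc 1 l = Finset.Ico 1 (l + 1) from (Finset.Ico_add_one_right_eq_Icc 1 l).symm,
              Finset.sum_Ico_eq_sum_range]
            apply Finset.sum_congr (by norm_num)
            intro i hi
            congr 2 <;> omega
          rw [key, claimA l l le_rfl]
          rw [Finset.Icc_self, Finset.sum_singleton, hEdiag l, LinearMap.comp_id]
          rw [LinearMap.sub_comp, LinearMap.id_comp, lm_sum_comp, hSdef l]
  constructor
  · intro l hlk
    rw [← main (k + 1) l (by omega)]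
    apply Finset.sum_congr rfl
    intro i hi
    have hi' : i ≤ l := by
      have := Finset.mem_range.mp hi; omega
    congr 1
    by_cases hil : i = l
    · subst hil
      rw [Nat.sub_self, hp0, show k + 1 - i + i = k + 1 from by omega,
        Mdiag (k + 1) (by omega)]
    · rw [hp (l - i) (by omega) (by omega), show k + 1 - (l - i) = k + 1 - l + i from by omega]
  · intro i h1 h2
    obtain ⟨m, rfl⟩ : ∃ m, i = m + 1 := ⟨i - 1, by omega⟩
    refine ⟨?_, ?_, fun x hx => SzeroN (m + 1) (by omega) x hx⟩
    · intro y hy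
      obtain ⟨x, -, rfl⟩ := Submodule.mem_map.mp hy
      exact Srange m x
    · apply le_antisymm
      · rw [hRdef m]
        exact Submodule.map_mono (le_of_eq_of_le rfl ((hNcompl m).2 ▸ le_sup_left))
      · rw [hRdef m, ← (hNcompl m).2, Submodule.map_sup]
        refine sup_le le_rfl ?_
        intro y hy
        obtain ⟨x, hx, rfl⟩ := Submodule.mem_map.mp hy
        rw [SzeroN (m + 1) (by omega) x hx]
        exact zero_mem _
end

section
/- For every k ≥ 0 and every 1 ≤ j ≤ k+1, the following identities of linear maps B → B̄ hold: Σ_{a=1}^{j} L_{a−1}∘M_{a,j} = Σ_{v=1}^{j} S̄_v∘E_{v,j} = S_j. (Equivalently, (L_0 ⋯ L_k)·M^{(k+1)} = (S̄_1 ⋯ S̄_{k+1})·E^{(k+1)} = (S_1 ⋯ S_{k+1}) as operator row vectors, with M^{(k+1)} = (M_{a,b})_{1≤a≤b≤k+1} and E^{(k+1)} = (E_{a,b})_{1≤a≤b≤k+1} upper triangular operator matrices.) -/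
theorem stmt_1
    {𝕂 : Type*} [RCLike 𝕂]
    {B B' : Type*} [AddCommGroup B] [Module 𝕂 B]
    [AddCommGroup B'] [Module 𝕂 B']
    (L : ℕ → B →ₗ[𝕂] B')
    (Sb S : ℕ → B →ₗ[𝕂] B')
    (N Nc : ℕ → Submodule 𝕂 B)
    (R Rc : ℕ → Submodule 𝕂 B')
    (P : ℕ → B' →ₗ[𝕂] B')
    (T : ℕ → B' →ₗ[𝕂] B)
    (E M : ℕ → ℕ → B →ₗ[𝕂] B)
    (hL : ∃ i, L i ≠ 0)
    (hN0 : N 0 = ⊤) (hRc0 : Rc 0 = ⊤)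
    (hSb1 : Sb 1 = L 0)
    (hSbrec : ∀ k, 1 ≤ k → Sb (k + 1) = ∑ i ∈ Finset.Icc 1 k, (L i).comp (M i k))
    (hSdef : ∀ k, S (k + 1) = Sb (k + 1) - ∑ i ∈ Finset.Icc 1 k, (P i).comp (Sb (k + 1)))
    (hNdef : ∀ k, N (k + 1) = LinearMap.ker (S (k + 1)) ⊓ N k)
    (hRdef : ∀ k, R (k + 1) = Submodule.map (S (k + 1)) (N k))
    (hNcompl : ∀ k, Disjoint (Nc (k + 1)) (N (k + 1)) ∧ Nc (k + 1) ⊔ N (k + 1) = N k)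
    (hRcompl : ∀ k, Disjoint (R (k + 1)) (Rc (k + 1)) ∧ R (k + 1) ⊔ Rc (k + 1) = Rc k)
    (hPrange : ∀ i, 1 ≤ i → LinearMap.range (P i) ≤ R i)
    (hPid : ∀ i, 1 ≤ i → ∀ y ∈ R i, P i y = y)
    (hPzeroRc : ∀ i, 1 ≤ i → ∀ y ∈ Rc i, P i y = 0)
    (hPzeroR : ∀ i j, 1 ≤ j → j < i → ∀ y ∈ R j, P i y = 0)
    (hTrange : ∀ i, 1 ≤ i → ∀ y, T i y ∈ Nc i)
    (hTS : ∀ i, 1 ≤ i → ∀ x ∈ Nc i, T i (S i x) = x)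
    (hST : ∀ i, 1 ≤ i → ∀ y, S i (T i y) = P i y)
    (hE11 : E 1 1 = LinearMap.id)
    (hEdiag : ∀ k, E (k + 1) (k + 1) = LinearMap.id)
    (hErec : ∀ k i, 1 ≤ i → i ≤ k →
      E i (k + 1) = -((T i).comp (∑ v ∈ Finset.Icc (i + 1) (k + 1), (Sb v).comp (E v (k + 1)))))
    (hM11 : M 1 1 = LinearMap.id)
    (hM1 : ∀ k, 1 ≤ k → M 1 (k + 1) = E 1 (k + 1))
    (hMrec : ∀ k a, 2 ≤ a → a ≤ k + 1 →
      M a (k + 1) = ∑ b ∈ Finset.Icc (a - 1) k, (M (a - 1) b).comp (E (b + 1) (k + 1)))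
    :
    ∀ k : ℕ, ∀ j, 1 ≤ j → j ≤ k + 1 →
      (∑ a ∈ Finset.Icc 1 j, (L (a - 1)).comp (M a j)
        = ∑ v ∈ Finset.Icc 1 j, (Sb v).comp (E v j)) ∧
      (∑ v ∈ Finset.Icc 1 j, (Sb v).comp (E v j) = S j) := by
  -- basic facts about the projections P
  have hRcRc : ∀ m j : ℕ, m ≤ j → Rc j ≤ Rc m := by
    intro m j h
    induction j with
    | zero => have : m = 0 := Nat.le_zero.mp h; simp [this]
    | succ n ih =>
      rcases Nat.eq_or_lt_of_le h with h' | h'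
      · subst h'; exact le_rfl
      · have h1 : Rc (n + 1) ≤ Rc n := by
          rw [← (hRcompl n).2]; exact le_sup_right
        exact h1.trans (ih (Nat.lt_succ_iff.mp h'))
  have hRRc : ∀ m i : ℕ, m < i → R i ≤ Rc m := by
    intro m i h
    obtain ⟨n, rfl⟩ : ∃ n, i = n + 1 := ⟨i - 1, by omega⟩
    have h1 : R (n + 1) ≤ Rc n := by rw [← (hRcompl n).2]; exact le_sup_left
    exact h1.trans (hRcRc m n (by omega))
  have hPP : ∀ m i : ℕ, 1 ≤ m → 1 ≤ i → m ≠ i → ∀ y, P m (P i y) = 0 := by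
    intro m i hm hi hne y
    have hyR : P i y ∈ R i := hPrange i hi (LinearMap.mem_range_self _ y)
    rcases Nat.lt_or_ge m i with h | h
    · exact hPzeroRc m hm _ (hRRc m i h hyR)
    · exact hPzeroR m i hi (by omega) _ hyR
  have hPPself : ∀ m : ℕ, 1 ≤ m → ∀ y, P m (P m y) = P m y := fun m hm y =>
    hPid m hm _ (hPrange m hm (LinearMap.mem_range_self _ y))
  -- pointwise form of the definition of S
  have hSapp : ∀ k z, S (k + 1) z = Sb (k + 1) z - ∑ m ∈ Finset.Icc 1 k, P m (Sb (k + 1) z) := by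
    intro k z
    rw [hSdef k]
    simp [LinearMap.sub_apply, LinearMap.sum_apply, LinearMap.comp_apply]
  have hSbS : ∀ n z, Sb (n + 1) z = S (n + 1) z + ∑ m ∈ Finset.Icc 1 n, P m (Sb (n + 1) z) := by
    intro n z
    rw [hSapp n z]; abel
  -- key identity for part 2, by downward induction
  have key2 : ∀ k d i : ℕ, i + d = k + 1 → 1 ≤ i → ∀ x,
      (∑ w ∈ Finset.Icc i (k + 1), Sb w (E w (k + 1) x))
        - ∑ m ∈ Finset.Icc 1 (i - 1),
            P m (∑ w ∈ Finset.Icc i (k + 1), Sb w (E w (k + 1) x))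
      = S (k + 1) x := by
    intro k d
    induction d with
    | zero =>
      intro i h1 h2 x
      have hik : i = k + 1 := by omega
      subst hik
      simp only [Finset.Icc_self, Finset.sum_singleton, hEdiag k, LinearMap.id_coe, id_eq,
        Nat.add_sub_cancel]
      exact (hSapp k x).symm
    | succ d ih =>
      intro i h1 h2 x
      obtain ⟨i', rfl⟩ : ∃ i', i = i' + 1 := ⟨i - 1, by omega⟩
      simp only [Nat.add_sub_cancel]
      set y := ∑ w ∈ Finset.Icc (i' + 1 + 1) (k + 1), Sb w (E w (k + 1) x) with hy
      have hE : E (i' + 1) (k + 1) x = -(T (i' + 1) y) := by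
        rw [hErec k (i' + 1) (by omega) (by omega)]
        simp [LinearMap.neg_apply, LinearMap.comp_apply, LinearMap.sum_apply, hy]
      have h1c : Sb (i' + 1) (T (i' + 1) y)
          = P (i' + 1) y + ∑ m ∈ Finset.Icc 1 i', P m (Sb (i' + 1) (T (i' + 1) y)) := by
        conv_lhs => rw [hSbS i' (T (i' + 1) y)]
        rw [hST (i' + 1) (by omega) y]
      have hsplit : Finset.Icc (i' + 1) (k + 1) = insert (i' + 1) (Finset.Icc (i' + 2) (k + 1)) := by
        ext a; simp only [Finset.mem_Icc, Finset.mem_insert]; omega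
      have hnotmem : (i' + 1) ∉ Finset.Icc (i' + 2) (k + 1) := by
        simp only [Finset.mem_Icc]; omega
      have hA : (∑ w ∈ Finset.Icc (i' + 1) (k + 1), Sb w (E w (k + 1) x))
          = y - P (i' + 1) y - ∑ m ∈ Finset.Icc 1 i', P m (Sb (i' + 1) (T (i' + 1) y)) := by
        rw [hsplit, Finset.sum_insert hnotmem, hE, map_neg]
        conv_lhs => rw [h1c]
        rw [show Finset.Icc (i' + 1 + 1) (k + 1) = Finset.Icc (i' + 2) (k + 1) from rfl] at hy
        rw [← hy]
        abel
      have hPm : ∀ m ∈ Finset.Icc 1 i',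
          P m (∑ w ∈ Finset.Icc (i' + 1) (k + 1), Sb w (E w (k + 1) x))
            = P m y - P m (Sb (i' + 1) (T (i' + 1) y)) := by
        intro m hm
        obtain ⟨hm1, hm2⟩ := Finset.mem_Icc.mp hm
        have h3 : P m (∑ m' ∈ Finset.Icc 1 i', P m' (Sb (i' + 1) (T (i' + 1) y)))
            = P m (Sb (i' + 1) (T (i' + 1) y)) := by
          rw [map_sum]
          rw [Finset.sum_eq_single_of_mem m hm]
          · exact hPPself m hm1 _
          · intro m' hm' hne
            exact hPP m m' hm1 (Finset.mem_Icc.mp hm').1 hne.symm _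
        rw [hA, map_sub, map_sub, hPP m (i' + 1) hm1 (by omega) (by omega) y, h3, sub_zero]
      rw [Finset.sum_congr rfl hPm, hA, Finset.sum_sub_distrib]
      have hIH := ih (i' + 2) (by omega) (by omega) x
      simp only [show i' + 2 - 1 = i' + 1 from rfl] at hIH
      rw [show Finset.Icc (i' + 2) (k + 1) = Finset.Icc (i' + 1 + 1) (k + 1) from rfl, ← hy] at hIH
      rw [Finset.sum_Icc_succ_top (by omega : 1 ≤ i' + 1) (fun m => P m y)] at hIH
      rw [← hIH]
      abel
  -- index shift for sums
  have shift : ∀ (f : ℕ → B') (n : ℕ),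
      ∑ a ∈ Finset.Icc 2 (n + 1), f a = ∑ a ∈ Finset.Icc 1 n, f (a + 1) := by
    intro f n
    refine Finset.sum_nbij' (fun a => a - 1) (fun a => a + 1) ?_ ?_ ?_ ?_ ?_ <;>
      intro a ha <;> simp only [Finset.mem_Icc] at ha ⊢ <;>
      first
      | omega
      | (congr 1; omega)
  -- key identity for part 1
  have key1 : ∀ k, 1 ≤ k →
      (∑ a ∈ Finset.Icc 1 (k + 1), (L (a - 1)).comp (M a (k + 1)))
        = ∑ v ∈ Finset.Icc 1 (k + 1), (Sb v).comp (E v (k + 1)) := by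
    intro k hk
    ext x
    simp only [LinearMap.coe_sum, Finset.sum_apply, LinearMap.comp_apply]
    have hsplit1 : Finset.Icc 1 (k + 1) = insert 1 (Finset.Icc 2 (k + 1)) := by
      ext a; simp only [Finset.mem_Icc, Finset.mem_insert]; omega
    have hnm : (1 : ℕ) ∉ Finset.Icc 2 (k + 1) := by
      simp only [Finset.mem_Icc]; omega
    rw [hsplit1, Finset.sum_insert hnm, Finset.sum_insert hnm, hM1 k hk, hSb1]
    congr 1
    rw [shift (fun a => L (a - 1) (M a (k + 1) x)) k,
      shift (fun v => Sb v (E v (k + 1) x)) k]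
    simp only [Nat.add_sub_cancel]
    have hL1 : ∀ a ∈ Finset.Icc 1 k,
        L a (M (a + 1) (k + 1) x)
          = ∑ b ∈ Finset.Icc a k, L a (M a b (E (b + 1) (k + 1) x)) := by
      intro a ha
      obtain ⟨ha1, ha2⟩ := Finset.mem_Icc.mp ha
      rw [hMrec k (a + 1) (by omega) (by omega)]
      simp only [Nat.add_sub_cancel, LinearMap.coe_sum, Finset.sum_apply,
        LinearMap.comp_apply, map_sum]
    rw [Finset.sum_congr rfl hL1]
    rw [Finset.sum_comm' (s' := fun b => Finset.Icc 1 b) (t' := Finset.Icc 1 k)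
      (fun a b => by simp only [Finset.mem_Icc]; omega)]
    refine Finset.sum_congr rfl ?_
    intro b hb
    rw [hSbrec b (Finset.mem_Icc.mp hb).1]
    simp only [LinearMap.coe_sum, Finset.sum_apply, LinearMap.comp_apply]
  -- assemble
  intro k j hj1 hjk
  constructor
  · rcases Nat.lt_or_ge j 2 with h | h
    · have hj : j = 1 := by omega
      subst hj
      simp [Finset.Icc_self, hSb1, hM11, hE11]
    · obtain ⟨k', rfl⟩ : ∃ k', j = k' + 1 := ⟨j - 1, by omega⟩
      exact key1 k' (by omega)
  · obtain ⟨k', rfl⟩ : ∃ k', j = k' + 1 := ⟨j - 1, by omega⟩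
    ext x
    simp only [LinearMap.coe_sum, Finset.sum_apply, LinearMap.comp_apply]
    have h := key2 k' k' 1 (by omega) le_rfl x
    rw [show (1 : ℕ) - 1 = 0 from rfl, Finset.Icc_eq_empty (show ¬(1 : ℕ) ≤ 0 by omega),
      Finset.sum_empty, sub_zero] at h
    exact h
end

section
/- For every k ≥ 1 one has the identity of linear maps B̄ → B̄: Σ_{i=1}^{k} S̄_i∘e_{i,k+1} = −(𝒫_1 + ⋯ + 𝒫_k). -/
/-!
Write `Πₙ = 𝒫₁ + ⋯ + 𝒫ₙ` and `Tᵢ = Sᵢ⁻¹ ∘ 𝒫ᵢ`, so that `Sᵢ ∘ Tᵢ = 𝒫ᵢ`. The recursion for `e` gives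
`∑_{i ≤ n+1} S̄ᵢ e_{i,n+2} = (∑_{i ≤ n} S̄ᵢ e_{i,n+1}) (I - S̄ₙ₊₁ Tₙ₊₁) - S̄ₙ₊₁ Tₙ₊₁`,
so by induction on `n` (starting from the empty sums at `n = 0`) the left side is
`-Πₙ - (I - Πₙ) S̄ₙ₊₁ Tₙ₊₁ = -Πₙ - Sₙ₊₁ Tₙ₊₁ = -Πₙ₊₁`.
-/
section

variable {R X Y : Type*} [Semiring R] [AddCommGroup X] [Module R X] [AddCommGroup Y] [Module R Y]

theorem sum_comp_e_succ (Sb : ℕ → X →ₗ[R] Y) (T : ℕ → Y →ₗ[R] X) (e : ℕ → ℕ → Y →ₗ[R] X)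
    (heBase : ∀ m, 2 ≤ m → e (m - 1) m = -(T (m - 1)))
    (heStep : ∀ m i, 1 ≤ i → i + 2 ≤ m →
      e i m = (e i (m - 1)).comp (LinearMap.id - (Sb (m - 1)).comp (T (m - 1))))
    (n : ℕ) :
    ∑ i ∈ Finset.Icc 1 (n + 1), (Sb i).comp (e i (n + 1 + 1)) =
      (∑ i ∈ Finset.Icc 1 n, (Sb i).comp (e i (n + 1))).comp
          (LinearMap.id - (Sb (n + 1)).comp (T (n + 1))) - (Sb (n + 1)).comp (T (n + 1)) := by
  have hlast : e (n + 1) (n + 1 + 1) = -T (n + 1) := heBase (n + 2) (by omega)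
  have hstep : ∀ i ∈ Finset.Icc 1 n, (Sb i).comp (e i (n + 1 + 1)) =
      ((Sb i).comp (e i (n + 1))).comp (LinearMap.id - (Sb (n + 1)).comp (T (n + 1))) := by
    intro i hi
    rw [heStep (n + 2) i (Finset.mem_Icc.1 hi).1 (by grind)]
    rfl
  rw [Finset.sum_Icc_succ_top (by omega), Finset.sum_congr rfl hstep, hlast,
    LinearMap.comp_neg, ← sub_eq_add_neg]
  ext y
  simp only [LinearMap.sub_apply, LinearMap.comp_apply, LinearMap.sum_apply]

theorem neg_comp_id_sub_sub_eq (q : Y →ₗ[R] Y) (s : X →ₗ[R] Y) (t : Y →ₗ[R] X) (p : Y →ₗ[R] Y)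
    (h : (s - q ∘ₗ s) ∘ₗ t = p) :
    (-q) ∘ₗ (LinearMap.id - s ∘ₗ t) - s ∘ₗ t = -(q + p) := by
  subst h
  ext y
  simp only [LinearMap.sub_apply, LinearMap.comp_apply, LinearMap.neg_apply, LinearMap.id_apply,
    LinearMap.add_apply, map_sub]
  abel

end

theorem stmt_2_general
    {𝕂 : Type*} [RCLike 𝕂]
    {B B' : Type*} [AddCommGroup B] [Module 𝕂 B]
    [AddCommGroup B'] [Module 𝕂 B']
    (Sb S : ℕ → B →ₗ[𝕂] B')
    (P : ℕ → B' →ₗ[𝕂] B')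
    (T : ℕ → B' →ₗ[𝕂] B)
    (hSdef : ∀ k, S (k + 1) = Sb (k + 1) - ∑ i ∈ Finset.Icc 1 k, (P i).comp (Sb (k + 1)))
    (hST : ∀ i, 1 ≤ i → ∀ y, S i (T i y) = P i y)
    (e : ℕ → ℕ → B' →ₗ[𝕂] B)
    (heBase : ∀ m, 2 ≤ m → e (m - 1) m = -(T (m - 1)))
    (heStep : ∀ m i, 1 ≤ i → i + 2 ≤ m →
      e i m = (e i (m - 1)).comp ((LinearMap.id : B' →ₗ[𝕂] B') - (Sb (m - 1)).comp (T (m - 1))))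
    :
    ∀ k, 1 ≤ k →
      ∑ i ∈ Finset.Icc 1 k, (Sb i).comp (e i (k + 1)) = -(∑ i ∈ Finset.Icc 1 k, P i) := by
  suffices key : ∀ k, ∑ i ∈ Finset.Icc 1 k, (Sb i).comp (e i (k + 1)) =
      -(∑ i ∈ Finset.Icc 1 k, P i) from fun k _ => key k
  intro k
  induction k with
  | zero => simp
  | succ n ih =>
    have hST_succ : (Sb (n + 1) - (∑ i ∈ Finset.Icc 1 n, P i) ∘ₗ Sb (n + 1)) ∘ₗ T (n + 1) =
        P (n + 1) := by
      ext y
      simpa [hSdef, LinearMap.sum_apply] using hST (n + 1) n.succ_pos y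
    rw [sum_comp_e_succ Sb T e heBase heStep, ih, neg_comp_id_sub_sub_eq _ _ _ _ hST_succ,
      Finset.sum_Icc_succ_top n.succ_pos]

theorem stmt_2
    {𝕂 : Type*} [RCLike 𝕂]
    {B B' : Type*} [AddCommGroup B] [Module 𝕂 B]
    [AddCommGroup B'] [Module 𝕂 B']
    (L : ℕ → B →ₗ[𝕂] B')
    (Sb S : ℕ → B →ₗ[𝕂] B')
    (N Nc : ℕ → Submodule 𝕂 B)
    (R Rc : ℕ → Submodule 𝕂 B')
    (P : ℕ → B' →ₗ[𝕂] B')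
    (T : ℕ → B' →ₗ[𝕂] B)
    (E M : ℕ → ℕ → B →ₗ[𝕂] B)
    (hL : ∃ i, L i ≠ 0)
    (hN0 : N 0 = ⊤) (hRc0 : Rc 0 = ⊤)
    (hSb1 : Sb 1 = L 0)
    (hSbrec : ∀ k, 1 ≤ k → Sb (k + 1) = ∑ i ∈ Finset.Icc 1 k, (L i).comp (M i k))
    (hSdef : ∀ k, S (k + 1) = Sb (k + 1) - ∑ i ∈ Finset.Icc 1 k, (P i).comp (Sb (k + 1)))
    (hNdef : ∀ k, N (k + 1) = LinearMap.ker (S (k + 1)) ⊓ N k)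
    (hRdef : ∀ k, R (k + 1) = Submodule.map (S (k + 1)) (N k))
    (hNcompl : ∀ k, Disjoint (Nc (k + 1)) (N (k + 1)) ∧ Nc (k + 1) ⊔ N (k + 1) = N k)
    (hRcompl : ∀ k, Disjoint (R (k + 1)) (Rc (k + 1)) ∧ R (k + 1) ⊔ Rc (k + 1) = Rc k)
    (hPrange : ∀ i, 1 ≤ i → LinearMap.range (P i) ≤ R i)
    (hPid : ∀ i, 1 ≤ i → ∀ y ∈ R i, P i y = y)
    (hPzeroRc : ∀ i, 1 ≤ i → ∀ y ∈ Rc i, P i y = 0)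
    (hPzeroR : ∀ i j, 1 ≤ j → j < i → ∀ y ∈ R j, P i y = 0)
    (hTrange : ∀ i, 1 ≤ i → ∀ y, T i y ∈ Nc i)
    (hTS : ∀ i, 1 ≤ i → ∀ x ∈ Nc i, T i (S i x) = x)
    (hST : ∀ i, 1 ≤ i → ∀ y, S i (T i y) = P i y)
    (hE11 : E 1 1 = LinearMap.id)
    (hEdiag : ∀ k, E (k + 1) (k + 1) = LinearMap.id)
    (hErec : ∀ k i, 1 ≤ i → i ≤ k →
      E i (k + 1) = -((T i).comp (∑ v ∈ Finset.Icc (i + 1) (k + 1), (Sb v).comp (E v (k + 1)))))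
    (hM11 : M 1 1 = LinearMap.id)
    (hM1 : ∀ k, 1 ≤ k → M 1 (k + 1) = E 1 (k + 1))
    (hMrec : ∀ k a, 2 ≤ a → a ≤ k + 1 →
      M a (k + 1) = ∑ b ∈ Finset.Icc (a - 1) k, (M (a - 1) b).comp (E (b + 1) (k + 1)))
    (e : ℕ → ℕ → B' →ₗ[𝕂] B)
    (heBase : ∀ m, 2 ≤ m → e (m - 1) m = -(T (m - 1)))
    (heStep : ∀ m i, 1 ≤ i → i + 2 ≤ m →
      e i m = (e i (m - 1)).comp ((LinearMap.id : B' →ₗ[𝕂] B') - (Sb (m - 1)).comp (T (m - 1))))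
    :
    ∀ k, 1 ≤ k →
      ∑ i ∈ Finset.Icc 1 k, (Sb i).comp (e i (k + 1)) = -(∑ i ∈ Finset.Icc 1 k, P i) :=
  stmt_2_general Sb S P T hSdef hST e heBase heStep
end

section
/- For every k ≥ 1 and every 1 ≤ i ≤ k, the component E_{i,k+1} defined by the backward recursion admits the closed form E_{i,k+1} = e_{i,k+1}∘S̄_{k+1}; explicitly, E_{k,k+1} = −S_k^{-1}∘𝒫_k∘S̄_{k+1} and, for i ≤ k−1, E_{i,k+1} = −S_i^{-1}∘𝒫_i∘(I_{B̄} − B_{i+1})∘⋯∘(I_{B̄} − B_k)∘S̄_{k+1}. -/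
/-!
Write `F i := ∑_{v = i+1}^{k+1} S̄_v ∘ E_{v,k+1}`, so that the backward recursion reads
`E_{i,k+1} = -T_i ∘ F_i` with `T_i = S_i⁻¹ ∘ 𝒫_i`. Peeling off the first summand gives
`F_i = (I - S̄_{i+1} ∘ T_{i+1}) ∘ F_{i+1}` and `F_k = S̄_{k+1}`, hence
`F_i = (I - B_{i+1}) ∘ ⋯ ∘ (I - B_k) ∘ S̄_{k+1}`. Unwinding the forward recursion of `e` produces
the same ordered product, `e_{i,k+1} = -T_i ∘ (I - B_{i+1}) ∘ ⋯ ∘ (I - B_k)`.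
-/

open Finset

namespace BackwardRecursion

variable {𝕂 B B' : Type*} [Semiring 𝕂] [AddCommGroup B] [Module 𝕂 B]
  [AddCommGroup B'] [Module 𝕂 B'] (Sb : ℕ → B →ₗ[𝕂] B') (T : ℕ → B' →ₗ[𝕂] B)

/-- The ordered product `(I - B_a) ∘ ⋯ ∘ (I - B_{a+n-1})`, where `B_j = S̄_j ∘ T_j`. -/
def idSubProd (a n : ℕ) : Module.End 𝕂 B' :=
  ((List.range' a n).map fun j => 1 - Sb j ∘ₗ T j).prod

theorem idSubProd_zero (a : ℕ) : idSubProd Sb T a 0 = 1 := rfl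

theorem idSubProd_succ (a n : ℕ) :
    idSubProd Sb T a (n + 1) = (1 - Sb a ∘ₗ T a) * idSubProd Sb T (a + 1) n := by
  simp [idSubProd, List.range'_succ]

theorem idSubProd_succ' (a n : ℕ) :
    idSubProd Sb T a (n + 1) = idSubProd Sb T a n * (1 - Sb (a + n) ∘ₗ T (a + n)) := by
  simp [idSubProd, List.range'_concat]

variable {Sb T}

theorem eq_neg_comp_idSubProd (e : ℕ → ℕ → B' →ₗ[𝕂] B)
    (heBase : ∀ m, 2 ≤ m → e (m - 1) m = -T (m - 1))
    (heStep : ∀ m i, 1 ≤ i → i + 2 ≤ m →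
      e i m = e i (m - 1) ∘ₗ ((LinearMap.id : B' →ₗ[𝕂] B') - Sb (m - 1) ∘ₗ T (m - 1)))
    {i : ℕ} (hi : 1 ≤ i) (n : ℕ) :
    e i (i + 1 + n) = -(T i ∘ₗ idSubProd Sb T (i + 1) n) := by
  induction n with
  | zero => simpa [idSubProd_zero, Module.End.one_eq_id] using heBase (i + 1) (by omega)
  | succ n ih =>
    rw [heStep _ i hi (by omega), show i + 1 + (n + 1) - 1 = i + 1 + n by omega, ih,
      idSubProd_succ', Module.End.mul_eq_comp, Module.End.one_eq_id, LinearMap.neg_comp,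
      LinearMap.comp_assoc]

theorem sum_comp_eq_idSubProd_comp (E : ℕ → ℕ → B →ₗ[𝕂] B) {k : ℕ}
    (hEdiag : E (k + 1) (k + 1) = LinearMap.id)
    (hErec : ∀ i, 1 ≤ i → i ≤ k →
      E i (k + 1) = -(T i ∘ₗ ∑ v ∈ Icc (i + 1) (k + 1), Sb v ∘ₗ E v (k + 1)))
    (n : ℕ) {i : ℕ} (hik : i + n = k) :
    ∑ v ∈ Icc (i + 1) (k + 1), Sb v ∘ₗ E v (k + 1) = idSubProd Sb T (i + 1) n ∘ₗ Sb (k + 1) := by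
  induction n generalizing i with
  | zero =>
    subst hik
    rw [add_zero, Icc_self, sum_singleton, hEdiag, idSubProd_zero, Module.End.one_eq_id,
      LinearMap.comp_id, LinearMap.id_comp]
  | succ n ih =>
    have htail := ih (i := i + 1) (by omega)
    rw [← insert_Icc_add_one_left_eq_Icc (show i + 1 ≤ k + 1 by omega), sum_insert (by simp),
      htail, hErec _ (by omega) (by omega), htail, idSubProd_succ]
    ext x
    simp [sub_eq_neg_add]

end BackwardRecursion

open BackwardRecursion in
theorem stmt_3_general
    {𝕂 : Type*} [RCLike 𝕂]
    {B B' : Type*} [AddCommGroup B] [Module 𝕂 B]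
    [AddCommGroup B'] [Module 𝕂 B']
    (Sb : ℕ → B →ₗ[𝕂] B')
    (T : ℕ → B' →ₗ[𝕂] B)
    (E : ℕ → ℕ → B →ₗ[𝕂] B)
    (hEdiag : ∀ k, E (k + 1) (k + 1) = LinearMap.id)
    (hErec : ∀ k i, 1 ≤ i → i ≤ k →
      E i (k + 1) = -((T i).comp (∑ v ∈ Finset.Icc (i + 1) (k + 1), (Sb v).comp (E v (k + 1)))))
    (e : ℕ → ℕ → B' →ₗ[𝕂] B)
    (heBase : ∀ m, 2 ≤ m → e (m - 1) m = -(T (m - 1)))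
    (heStep : ∀ m i, 1 ≤ i → i + 2 ≤ m →
      e i m = (e i (m - 1)).comp ((LinearMap.id : B' →ₗ[𝕂] B') - (Sb (m - 1)).comp (T (m - 1))))
    :
    (∀ k, 1 ≤ k → ∀ i, 1 ≤ i → i ≤ k → E i (k + 1) = (e i (k + 1)).comp (Sb (k + 1))) ∧
    (∀ k, 1 ≤ k → E k (k + 1) = -((T k).comp (Sb (k + 1)))) := by
  have closedForm : ∀ k i, 1 ≤ i → i ≤ k → E i (k + 1) = e i (k + 1) ∘ₗ Sb (k + 1) := by
    intro k i hi hik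
    obtain ⟨n, rfl⟩ := Nat.exists_eq_add_of_le hik
    rw [hErec _ i hi hik, sum_comp_eq_idSubProd_comp E (hEdiag _) (hErec _) n rfl,
      show i + n + 1 = i + 1 + n by omega, eq_neg_comp_idSubProd e heBase heStep hi n,
      LinearMap.neg_comp, LinearMap.comp_assoc]
  refine ⟨fun k _ i hi hik => closedForm k i hi hik, fun k hk => ?_⟩
  rw [closedForm k k hk le_rfl]
  simpa using congrArg (· ∘ₗ Sb (k + 1)) (heBase (k + 1) (by omega))

theorem stmt_3
    {𝕂 : Type*} [RCLike 𝕂]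
    {B B' : Type*} [AddCommGroup B] [Module 𝕂 B]
    [AddCommGroup B'] [Module 𝕂 B']
    (L : ℕ → B →ₗ[𝕂] B')
    (Sb S : ℕ → B →ₗ[𝕂] B')
    (N Nc : ℕ → Submodule 𝕂 B)
    (R Rc : ℕ → Submodule 𝕂 B')
    (P : ℕ → B' →ₗ[𝕂] B')
    (T : ℕ → B' →ₗ[𝕂] B)
    (E M : ℕ → ℕ → B →ₗ[𝕂] B)
    (hL : ∃ i, L i ≠ 0)
    (hN0 : N 0 = ⊤) (hRc0 : Rc 0 = ⊤)
    (hSb1 : Sb 1 = L 0)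
    (hSbrec : ∀ k, 1 ≤ k → Sb (k + 1) = ∑ i ∈ Finset.Icc 1 k, (L i).comp (M i k))
    (hSdef : ∀ k, S (k + 1) = Sb (k + 1) - ∑ i ∈ Finset.Icc 1 k, (P i).comp (Sb (k + 1)))
    (hNdef : ∀ k, N (k + 1) = LinearMap.ker (S (k + 1)) ⊓ N k)
    (hRdef : ∀ k, R (k + 1) = Submodule.map (S (k + 1)) (N k))
    (hNcompl : ∀ k, Disjoint (Nc (k + 1)) (N (k + 1)) ∧ Nc (k + 1) ⊔ N (k + 1) = N k)
    (hRcompl : ∀ k, Disjoint (R (k + 1)) (Rc (k + 1)) ∧ R (k + 1) ⊔ Rc (k + 1) = Rc k)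
    (hPrange : ∀ i, 1 ≤ i → LinearMap.range (P i) ≤ R i)
    (hPid : ∀ i, 1 ≤ i → ∀ y ∈ R i, P i y = y)
    (hPzeroRc : ∀ i, 1 ≤ i → ∀ y ∈ Rc i, P i y = 0)
    (hPzeroR : ∀ i j, 1 ≤ j → j < i → ∀ y ∈ R j, P i y = 0)
    (hTrange : ∀ i, 1 ≤ i → ∀ y, T i y ∈ Nc i)
    (hTS : ∀ i, 1 ≤ i → ∀ x ∈ Nc i, T i (S i x) = x)
    (hST : ∀ i, 1 ≤ i → ∀ y, S i (T i y) = P i y)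
    (hE11 : E 1 1 = LinearMap.id)
    (hEdiag : ∀ k, E (k + 1) (k + 1) = LinearMap.id)
    (hErec : ∀ k i, 1 ≤ i → i ≤ k →
      E i (k + 1) = -((T i).comp (∑ v ∈ Finset.Icc (i + 1) (k + 1), (Sb v).comp (E v (k + 1)))))
    (hM11 : M 1 1 = LinearMap.id)
    (hM1 : ∀ k, 1 ≤ k → M 1 (k + 1) = E 1 (k + 1))
    (hMrec : ∀ k a, 2 ≤ a → a ≤ k + 1 →
      M a (k + 1) = ∑ b ∈ Finset.Icc (a - 1) k, (M (a - 1) b).comp (E (b + 1) (k + 1)))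
    (e : ℕ → ℕ → B' →ₗ[𝕂] B)
    (heBase : ∀ m, 2 ≤ m → e (m - 1) m = -(T (m - 1)))
    (heStep : ∀ m i, 1 ≤ i → i + 2 ≤ m →
      e i m = (e i (m - 1)).comp ((LinearMap.id : B' →ₗ[𝕂] B') - (Sb (m - 1)).comp (T (m - 1))))
    :
    (∀ k, 1 ≤ k → ∀ i, 1 ≤ i → i ≤ k → E i (k + 1) = (e i (k + 1)).comp (Sb (k + 1))) ∧
    (∀ k, 1 ≤ k → E k (k + 1) = -((T k).comp (Sb (k + 1)))) :=
  stmt_3_general Sb T E hEdiag hErec e heBase heStep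
end

section
/- For every k ≥ 0, a tuple (b_k, b_{k−1}, …, b_0) ∈ B^{k+1} satisfies Σ_{i+j=l} L_i·b_j = 0 for all 0 ≤ l ≤ k (i.e., is a Jordan chain of length k+1) if and only if there exist elements n_j ∈ N_j for j = 1,…,k+1 such that b_{k+1−a} = Σ_{j=a}^{k+1} M_{a,j}·n_j for every a = 1,…,k+1. In particular, the root elements of Jordan chains of length k+1 are exactly the elements of N_{k+1}. -/
lemma aux_tri {β : Type*} [AddCommMonoid β] (lo hi : ℕ) (f : ℕ → ℕ → β) :
    ∑ c ∈ Finset.Icc lo hi, ∑ q ∈ Finset.Icc c hi, f c q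
      = ∑ q ∈ Finset.Icc lo hi, ∑ c ∈ Finset.Icc lo q, f c q := by
  have h := Finset.sum_Ico_Ico_comm lo (hi+1) f
  simpa only [Finset.Ico_add_one_right_eq_Icc] using h

lemma aux_shift {β : Type*} [AddCommMonoid β] (lo hi : ℕ) (g : ℕ → β) :
    ∑ a ∈ Finset.Icc (lo+1) (hi+1), g a = ∑ c ∈ Finset.Icc lo hi, g (c+1) := by
  simp only [← Finset.Ico_add_one_right_eq_Icc]
  rw [Finset.sum_Ico_eq_sum_range, Finset.sum_Ico_eq_sum_range]
  have h : hi + 1 + 1 - (lo+1) = hi + 1 - lo := by omega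
  rw [h]
  exact Finset.sum_congr rfl fun i _ => by congr 1; omega

lemma aux_icc_range {β : Type*} [AddCommMonoid β] {t l m : ℕ} (h : t + l = m) (f : ℕ → β) :
    ∑ a ∈ Finset.Icc t m, f a = ∑ i ∈ Finset.range (l+1), f (t+i) := by
  rw [← Finset.Ico_add_one_right_eq_Icc, Finset.sum_Ico_eq_sum_range]
  have h2 : m + 1 - t = l + 1 := by omega
  rw [h2]

lemma aux_swap {β : Type*} [AddCommMonoid β] (n : ℕ) (f : ℕ → ℕ → β) :
    ∑ i ∈ Finset.range n, ∑ q ∈ Finset.Icc (i+1) n, f (i+1) q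
      = ∑ q ∈ Finset.Icc 1 n, ∑ c ∈ Finset.Icc 1 q, f c q := by
  have h1 : ∑ i ∈ Finset.range n, ∑ q ∈ Finset.Icc (i+1) n, f (i+1) q
      = ∑ i ∈ Finset.Ico 1 (n+1), ∑ q ∈ Finset.Icc i n, f i q := by
    rw [Finset.sum_Ico_eq_sum_range]
    have h : n + 1 - 1 = n := by omega
    rw [h]
    exact Finset.sum_congr rfl fun i _ => by rw [Nat.add_comm 1 i]
  rw [h1]
  have h2 : ∀ i : ℕ, Finset.Icc i n = Finset.Ico i (n+1) := fun i => (Finset.Ico_add_one_right_eq_Icc i n).symm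
  calc ∑ i ∈ Finset.Ico 1 (n+1), ∑ q ∈ Finset.Icc i n, f i q
      = ∑ i ∈ Finset.Ico 1 (n+1), ∑ q ∈ Finset.Ico i (n+1), f i q := by
        exact Finset.sum_congr rfl fun i _ => by rw [h2 i]
    _ = ∑ q ∈ Finset.Ico 1 (n+1), ∑ i ∈ Finset.Ico 1 (q+1), f i q :=
        Finset.sum_Ico_Ico_comm 1 (n+1) f
    _ = ∑ q ∈ Finset.Icc 1 n, ∑ i ∈ Finset.Icc 1 q, f i q := by
        simp only [Finset.Ico_add_one_right_eq_Icc]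

theorem stmt_4
    {𝕂 : Type*} [RCLike 𝕂]
    {B B' : Type*} [AddCommGroup B] [Module 𝕂 B]
    [AddCommGroup B'] [Module 𝕂 B']
    (L : ℕ → B →ₗ[𝕂] B')
    (Sb S : ℕ → B →ₗ[𝕂] B')
    (N Nc : ℕ → Submodule 𝕂 B)
    (R Rc : ℕ → Submodule 𝕂 B')
    (P : ℕ → B' →ₗ[𝕂] B')
    (T : ℕ → B' →ₗ[𝕂] B)
    (E M : ℕ → ℕ → B →ₗ[𝕂] B)
    (hL : ∃ i, L i ≠ 0)
    (hN0 : N 0 = ⊤) (hRc0 : Rc 0 = ⊤)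
    (hSb1 : Sb 1 = L 0)
    (hSbrec : ∀ k, 1 ≤ k → Sb (k + 1) = ∑ i ∈ Finset.Icc 1 k, (L i).comp (M i k))
    (hSdef : ∀ k, S (k + 1) = Sb (k + 1) - ∑ i ∈ Finset.Icc 1 k, (P i).comp (Sb (k + 1)))
    (hNdef : ∀ k, N (k + 1) = LinearMap.ker (S (k + 1)) ⊓ N k)
    (hRdef : ∀ k, R (k + 1) = Submodule.map (S (k + 1)) (N k))
    (hNcompl : ∀ k, Disjoint (Nc (k + 1)) (N (k + 1)) ∧ Nc (k + 1) ⊔ N (k + 1) = N k)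
    (hRcompl : ∀ k, Disjoint (R (k + 1)) (Rc (k + 1)) ∧ R (k + 1) ⊔ Rc (k + 1) = Rc k)
    (hPrange : ∀ i, 1 ≤ i → LinearMap.range (P i) ≤ R i)
    (hPid : ∀ i, 1 ≤ i → ∀ y ∈ R i, P i y = y)
    (hPzeroRc : ∀ i, 1 ≤ i → ∀ y ∈ Rc i, P i y = 0)
    (hPzeroR : ∀ i j, 1 ≤ j → j < i → ∀ y ∈ R j, P i y = 0)
    (hTrange : ∀ i, 1 ≤ i → ∀ y, T i y ∈ Nc i)
    (hTS : ∀ i, 1 ≤ i → ∀ x ∈ Nc i, T i (S i x) = x)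
    (hST : ∀ i, 1 ≤ i → ∀ y, S i (T i y) = P i y)
    (hE11 : E 1 1 = LinearMap.id)
    (hEdiag : ∀ k, E (k + 1) (k + 1) = LinearMap.id)
    (hErec : ∀ k i, 1 ≤ i → i ≤ k →
      E i (k + 1) = -((T i).comp (∑ v ∈ Finset.Icc (i + 1) (k + 1), (Sb v).comp (E v (k + 1)))))
    (hM11 : M 1 1 = LinearMap.id)
    (hM1 : ∀ k, 1 ≤ k → M 1 (k + 1) = E 1 (k + 1))
    (hMrec : ∀ k a, 2 ≤ a → a ≤ k + 1 →
      M a (k + 1) = ∑ b ∈ Finset.Icc (a - 1) k, (M (a - 1) b).comp (E (b + 1) (k + 1)))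
    :
    ∀ k : ℕ,
      (∀ b : ℕ → B,
        (∀ l, l ≤ k → ∑ i ∈ Finset.range (l + 1), L i (b (l - i)) = 0) ↔
        (∃ n : ℕ → B, (∀ j, 1 ≤ j → j ≤ k + 1 → n j ∈ N j) ∧
          ∀ a, 1 ≤ a → a ≤ k + 1 →
            b (k + 1 - a) = ∑ j ∈ Finset.Icc a (k + 1), M a j (n j))) ∧
      (∀ b0 : B,
        (∃ b : ℕ → B, b 0 = b0 ∧
          ∀ l, l ≤ k → ∑ i ∈ Finset.range (l + 1), L i (b (l - i)) = 0) ↔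
        b0 ∈ N (k + 1)) := by
  classical
  -- S 1 = L 0
  have hS1 : S 1 = L 0 := by
    have h := hSdef 0
    rw [Finset.Icc_eq_empty (by omega), Finset.sum_empty, sub_zero, hSb1] at h
    exact h
  -- diagonal M
  have hMdiag : ∀ a : ℕ, M (a+1) (a+1) = LinearMap.id := by
    intro a
    induction a with
    | zero => exact hM11
    | succ a ih =>
      rw [hMrec (a+1) (a+2) (by omega) (by omega)]
      have e1 : a + 2 - 1 = a + 1 := by omega
      rw [e1, Finset.Icc_self, Finset.sum_singleton, ih, hEdiag (a+1), LinearMap.id_comp]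
  -- monotonicity
  have hNmono : ∀ k, N (k+1) ≤ N k := by
    intro k; rw [hNdef k]; exact inf_le_right
  have hNcN : ∀ k, Nc (k+1) ≤ N k := by
    intro k; rw [← (hNcompl k).2]; exact le_sup_left
  have hRcmono : ∀ k, Rc (k+1) ≤ Rc k := by
    intro k; rw [← (hRcompl k).2]; exact le_sup_right
  have hRRc : ∀ k, R (k+1) ≤ Rc k := by
    intro k; rw [← (hRcompl k).2]; exact le_sup_left
  have hRcle : ∀ i d : ℕ, Rc (i+d) ≤ Rc i := by
    intro i d
    induction d with
    | zero => exact le_rfl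
    | succ d ih => exact le_trans (hRcmono (i+d)) ih
  have hPkillHigh : ∀ i j, 1 ≤ i → i < j → ∀ y ∈ R j, P i y = 0 := by
    intro i j hi hij y hy
    obtain ⟨d, rfl⟩ := Nat.exists_eq_add_of_lt hij
    exact hPzeroRc i hi y (hRcle i d (hRRc (i+d) hy))
  -- decomposition of Sb
  have hSbdecomp : ∀ (j : ℕ) (x : B),
      Sb (j+1) x = S (j+1) x + ∑ m ∈ Finset.Icc 1 j, P m (Sb (j+1) x) := by
    intro j x
    have h : S (j+1) x = Sb (j+1) x - ∑ m ∈ Finset.Icc 1 j, P m (Sb (j+1) x) := by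
      rw [hSdef j]
      simp [LinearMap.sub_apply, LinearMap.sum_apply, LinearMap.comp_apply]
    rw [h, sub_add_cancel]
  -- E maps N k into N (v-1)
  have hLemC : ∀ k v, v ≤ k → ∀ n, n ∈ N k → E (v+1) (k+1) n ∈ N v := by
    intro k v hv n hn
    rcases eq_or_lt_of_le hv with heq | hlt
    · subst heq
      rw [hEdiag v]
      exact hn
    · rw [hErec k (v+1) (by omega) (by omega)]
      simp only [LinearMap.neg_apply, LinearMap.comp_apply]
      exact (N v).neg_mem (hNcN v (hTrange (v+1) (by omega) _))
  -- Key lemma: canonical chains are Jordan chains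
  have hLemB : ∀ j : ℕ, ∀ n ∈ N (j+1), ∀ t, 1 ≤ t → t ≤ j+1 →
      ∑ a ∈ Finset.Icc t (j+1), L (a-t) (M a (j+1) n) = 0 := by
    intro j
    induction j using Nat.strong_induction_on with
    | _ j ih =>
    intro n hn t ht1 ht2
    rcases Nat.eq_zero_or_pos j with rfl | hj
    · have ht : t = 1 := by omega
      subst ht
      rw [Finset.Icc_self, Finset.sum_singleton, hM11]
      have hn1 : n ∈ LinearMap.ker (S 1) ⊓ N 0 := by rw [← hNdef 0]; exact hn
      have h0 : S 1 n = 0 := hn1.1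
      rw [← hS1] at *
      simpa using h0
    · -- j ≥ 1
      have hnNj : n ∈ N j := hNmono j hn
      set y : ℕ → B' := fun i => ∑ v ∈ Finset.Icc (i+1) (j+1), Sb v (E v (j+1) n) with hydef
      have heEq : ∀ i, 1 ≤ i → i ≤ j → E i (j+1) n = -(T i (y i)) := by
        intro i h1 h2
        rw [hErec j i h1 h2]
        simp only [hydef, LinearMap.neg_apply, LinearMap.comp_apply, LinearMap.sum_apply]
      have hclaim : ∀ d i : ℕ, i + d = j → 1 ≤ i →
          y i = ∑ m ∈ Finset.Icc 1 i, P m (y i) := by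
        intro d
        induction d with
        | zero =>
          intro i hij h1
          have hi : i = j := by omega
          subst hi
          have hyj : y i = Sb (i+1) n := by
            simp only [hydef]
            rw [Finset.Icc_self, Finset.sum_singleton, hEdiag i]
            rfl
          have hSn : S (i+1) n = 0 := by
            have hn1 : n ∈ LinearMap.ker (S (i+1)) ⊓ N i := by rw [← hNdef i]; exact hn
            exact hn1.1
          rw [hyj]
          conv_lhs => rw [hSbdecomp i n]
          rw [hSn, zero_add]
        | succ d ihd =>
          intro i hij h1
          have hy' := ihd (i+1) (by omega) (by omega)
          have hsplit : y i = Sb (i+1) (E (i+1) (j+1) n) + y (i+1) := by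
            simp only [hydef]
            rw [← Finset.Ico_add_one_right_eq_Icc, Finset.sum_eq_sum_Ico_succ_bot (by omega),
              Finset.Ico_add_one_right_eq_Icc]
          have he : E (i+1) (j+1) n = -(T (i+1) (y (i+1))) := heEq (i+1) (by omega) (by omega)
          have hSe : S (i+1) (E (i+1) (j+1) n) = -(P (i+1) (y (i+1))) := by
            rw [he, map_neg, hST (i+1) (by omega)]
          have hSbe := hSbdecomp i (E (i+1) (j+1) n)
          rw [hSe] at hSbe
          rw [hsplit]
          simp only [map_add, Finset.sum_add_distrib]
          have hy1 : y (i+1) = (∑ m ∈ Finset.Icc 1 i, P m (y (i+1))) + P (i+1) (y (i+1)) := by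
            nth_rewrite 1 [hy']
            exact Finset.sum_Icc_succ_top (by omega) _
          nth_rewrite 1 [hSbe]
          nth_rewrite 2 [hy1]
          abel
      rcases Nat.lt_or_ge t 2 with ht2' | ht2'
      · -- t = 1
        have ht : t = 1 := by omega
        subst ht
        have hy1P : P 1 (y 1) = y 1 := by
          have h := hclaim (j-1) 1 (by omega) le_rfl
          rw [Finset.Icc_self, Finset.sum_singleton] at h
          exact h.symm
        rw [← Finset.Ico_add_one_right_eq_Icc, Finset.sum_eq_sum_Ico_succ_bot (by omega),
          Finset.Ico_add_one_right_eq_Icc]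
        have h2 : ∑ a ∈ Finset.Icc 2 (j+1), L (a-1) (M a (j+1) n) = y 1 := by
          have step1 : ∀ a ∈ Finset.Icc 2 (j+1), L (a-1) (M a (j+1) n)
              = ∑ bb ∈ Finset.Icc (a-1) j, L (a-1) (M (a-1) bb (E (bb+1) (j+1) n)) := by
            intro a ha
            obtain ⟨ha1, ha2⟩ := Finset.mem_Icc.mp ha
            rw [hMrec j a ha1 ha2]
            simp only [LinearMap.sum_apply, LinearMap.comp_apply, map_sum]
          rw [Finset.sum_congr rfl step1]
          rw [show (2:ℕ) = 1+1 from rfl, aux_shift 1 j]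
          simp only [Nat.add_sub_cancel]
          rw [aux_tri 1 j]
          have step2 : ∀ bb ∈ Finset.Icc 1 j,
              (∑ c ∈ Finset.Icc 1 bb, L c (M c bb (E (bb+1) (j+1) n)))
                = Sb (bb+1) (E (bb+1) (j+1) n) := by
            intro bb hbb
            obtain ⟨hb1, hb2⟩ := Finset.mem_Icc.mp hbb
            rw [hSbrec bb hb1]
            simp only [LinearMap.sum_apply, LinearMap.comp_apply]
          rw [Finset.sum_congr rfl step2]
          have hyv : y 1 = ∑ bb ∈ Finset.Icc 1 j, Sb (bb+1) (E (bb+1) (j+1) n) := by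
            simp only [hydef]
            exact aux_shift 1 j _
          rw [hyv]
        rw [h2]
        have he1 : E 1 (j+1) n = -(T 1 (y 1)) := heEq 1 le_rfl hj
        have hL0 : L (1-1) (M 1 (j+1) n) = -(y 1) := by
          rw [show (1:ℕ)-1 = 0 from rfl, hM1 j hj, he1, map_neg, ← hS1,
            hST 1 le_rfl, hy1P]
        rw [hL0, neg_add_cancel]
      · -- t ≥ 2
        obtain ⟨s, rfl⟩ : ∃ s, t = s + 1 := ⟨t - 1, by omega⟩
        have hs1 : 1 ≤ s := by omega
        rw [aux_shift s j]
        have step1 : ∀ c ∈ Finset.Icc s j, L (c+1-(s+1)) (M (c+1) (j+1) n)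
            = ∑ bb ∈ Finset.Icc c j, L (c-s) (M c bb (E (bb+1) (j+1) n)) := by
          intro c hc
          obtain ⟨hc1, hc2⟩ := Finset.mem_Icc.mp hc
          rw [hMrec j (c+1) (by omega) (by omega)]
          have e1 : c + 1 - 1 = c := by omega
          have e2 : c + 1 - (s+1) = c - s := by omega
          rw [e1, e2]
          simp only [LinearMap.sum_apply, LinearMap.comp_apply, map_sum]
        rw [Finset.sum_congr rfl step1]
        rw [aux_tri s j]
        apply Finset.sum_eq_zero
        intro bb hbb
        obtain ⟨hb1, hb2⟩ := Finset.mem_Icc.mp hbb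
        have hbb1 : 1 ≤ bb := by omega
        have hmem : E (bb+1) (j+1) n ∈ N bb := hLemC j bb hb2 n hnNj
        have hih := ih (bb-1) (by omega) (E (bb+1) (j+1) n) (by
          have e : bb - 1 + 1 = bb := by omega
          rw [e]; exact hmem) s hs1 (by omega)
        have e : bb - 1 + 1 = bb := by omega
        rw [e] at hih
        exact hih
  -- canonical chain property in chain form
  have hg_chain : ∀ (m : ℕ) (x : B), x ∈ N (m+1) → ∀ l, l ≤ m →
      ∑ i ∈ Finset.range (l+1), L i (M (m+1-(l-i)) (m+1) x) = 0 := by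
    intro m x hx l hl
    have h0 := hLemB m x hx (m+1-l) (by omega) (by omega)
    rw [aux_icc_range (t := m+1-l) (l := l) (m := m+1) (by omega)] at h0
    rw [← h0]
    apply Finset.sum_congr rfl
    intro i hi
    have hi' := Finset.mem_range.mp hi
    have e1 : m + 1 - l + i - (m + 1 - l) = i := by omega
    have e2 : m + 1 - l + i = m + 1 - (l - i) := by omega
    rw [e1, e2]
  -- main equivalence
  have main : ∀ k : ℕ, ∀ b : ℕ → B,
      (∀ l, l ≤ k → ∑ i ∈ Finset.range (l + 1), L i (b (l - i)) = 0) ↔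
      (∃ n : ℕ → B, (∀ j, 1 ≤ j → j ≤ k + 1 → n j ∈ N j) ∧
        ∀ a, 1 ≤ a → a ≤ k + 1 →
          b (k + 1 - a) = ∑ j ∈ Finset.Icc a (k + 1), M a j (n j)) := by
    intro k
    induction k with
    | zero =>
      intro b
      constructor
      · intro hb
        have h0 := hb 0 le_rfl
        rw [Finset.sum_range_one] at h0
        refine ⟨fun _ => b 0, ?_, ?_⟩
        · intro j hj1 hj2
          have hj : j = 1 := by omega
          subst hj
          rw [hNdef 0]
          refine ⟨LinearMap.mem_ker.mpr ?_, by rw [hN0]; trivial⟩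
          rw [hS1]
          exact h0
        · intro a ha1 ha2
          have ha : a = 1 := by omega
          subst ha
          rw [Finset.Icc_self, Finset.sum_singleton, hM11]
          rfl
      · rintro ⟨n, hmem, hrep⟩
        intro l hl
        have hl0 : l = 0 := by omega
        subst hl0
        rw [Finset.sum_range_one]
        have hb0 : b 0 = n 1 := by
          have h := hrep 1 le_rfl le_rfl
          rw [Finset.Icc_self, Finset.sum_singleton, hM11] at h
          exact h
        have hn1 : n 1 ∈ LinearMap.ker (S 1) ⊓ N 0 := by
          rw [← hNdef 0]; exact hmem 1 le_rfl le_rfl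
        show L 0 (b 0) = 0
        rw [hb0, ← hS1]
        exact hn1.1
    | succ k ih =>
      intro b
      constructor
      · -- forward
        intro hb
        obtain ⟨n, hmem, hrep⟩ := (ih b).mp (fun l hl => hb l (by omega))
        have hb0 : b 0 = n (k+1) := by
          have h := hrep (k+1) (by omega) le_rfl
          rw [Nat.sub_self, Finset.Icc_self, Finset.sum_singleton, hMdiag k] at h
          exact h
        have hC : (∑ q ∈ Finset.Icc 1 (k+1), Sb (q+1) (n q)) + L 0 (b (k+1)) = 0 := by
          have h := hb (k+1) le_rfl
          rw [Finset.sum_range_succ'] at h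
          have hterm : ∀ i ∈ Finset.range (k+1), L (i+1) (b (k+1-(i+1)))
              = ∑ q ∈ Finset.Icc (i+1) (k+1), L (i+1) (M (i+1) q (n q)) := by
            intro i hi
            have hi' := Finset.mem_range.mp hi
            rw [hrep (i+1) (by omega) (by omega), map_sum]
          rw [Finset.sum_congr rfl hterm] at h
          rw [aux_swap (k+1) (fun c q => L c (M c q (n q)))] at h
          have hterm2 : ∀ q ∈ Finset.Icc 1 (k+1),
              (∑ c ∈ Finset.Icc 1 q, L c (M c q (n q))) = Sb (q+1) (n q) := by
            intro q hq
            obtain ⟨hq1, hq2⟩ := Finset.mem_Icc.mp hq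
            rw [hSbrec q hq1]
            simp only [LinearMap.sum_apply, LinearMap.comp_apply]
          rw [Finset.sum_congr rfl hterm2, Nat.sub_zero] at h
          exact h
        have hSk2 : S (k+1+1) (n (k+1)) = 0 := by
          have happ := congrArg (P (k+1+1)) hC
          rw [map_add, map_sum, map_zero] at happ
          have h1 : P (k+1+1) (L 0 (b (k+1))) = 0 := by
            apply hPzeroR (k+1+1) 1 le_rfl (by omega)
            rw [hRdef 0]
            exact ⟨b (k+1), by rw [hN0]; trivial, by rw [hS1]⟩
          have h2 : ∀ q ∈ Finset.Icc 1 (k+1), P (k+1+1) (Sb (q+1) (n q))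
              = if q = k+1 then S (k+1+1) (n (k+1)) else 0 := by
            intro q hq
            obtain ⟨hq1, hq2⟩ := Finset.mem_Icc.mp hq
            have hnq : n q ∈ N q := hmem q hq1 hq2
            rw [hSbdecomp q (n q), map_add, map_sum]
            have hPm : ∀ m_ ∈ Finset.Icc 1 q, P (k+1+1) (P m_ (Sb (q+1) (n q))) = 0 := by
              intro m_ hm
              obtain ⟨hm1, hm2⟩ := Finset.mem_Icc.mp hm
              exact hPzeroR (k+1+1) m_ hm1 (by omega) _ (hPrange m_ hm1 ⟨_, rfl⟩)
            rw [Finset.sum_congr rfl hPm, Finset.sum_const_zero, add_zero]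
            have hmemR : S (q+1) (n q) ∈ R (q+1) := by
              rw [hRdef q]
              exact ⟨n q, hnq, rfl⟩
            by_cases hq3 : q = k+1
            · subst hq3
              rw [if_pos rfl]
              exact hPid (k+1+1) (by omega) _ hmemR
            · rw [if_neg hq3]
              exact hPzeroR (k+1+1) (q+1) (by omega) (by omega) _ hmemR
          rw [Finset.sum_congr rfl h2, Finset.sum_ite_eq' _ (k+1)
            (fun _ => S (k+1+1) (n (k+1))), if_pos (by simp), h1, add_zero] at happ
          exact happ
        have hb0mem : b 0 ∈ N (k+1+1) := by
          rw [hb0, hNdef (k+1)]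
          exact ⟨LinearMap.mem_ker.mpr hSk2, hmem (k+1) (by omega) le_rfl⟩
        -- chain for dropped/shifted difference
        have hgc := hg_chain (k+1) (b 0) hb0mem
        have hg0 : M (k+1+1-(0:ℕ)) (k+1+1) (b 0) = b 0 := by
          rw [Nat.sub_zero, hMdiag (k+1)]
          rfl
        have hchain_h : ∀ l, l ≤ k → ∑ i ∈ Finset.range (l+1),
            L i ((fun x => b (x+1) - M (k+1+1-(x+1)) (k+1+1) (b 0)) (l-i)) = 0 := by
          intro l hl
          show ∑ i ∈ Finset.range (l+1),
            L i (b ((l-i)+1) - M (k+1+1-((l-i)+1)) (k+1+1) (b 0)) = 0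
          have hcong : ∀ i ∈ Finset.range (l+1),
              L i (b (l-i+1) - M (k+1+1-(l-i+1)) (k+1+1) (b 0))
              = L i (b (l+1-i)) - L i (M (k+1+1-(l+1-i)) (k+1+1) (b 0)) := by
            intro i hi
            have hi' := Finset.mem_range.mp hi
            have e : l - i + 1 = l + 1 - i := by omega
            rw [e, map_sub]
          rw [Finset.sum_congr rfl hcong, Finset.sum_sub_distrib]
          have hA : ∑ i ∈ Finset.range (l+1), L i (b (l+1-i)) = -(L (l+1) (b 0)) := by
            have h := hb (l+1) (by omega)
            rw [Finset.sum_range_succ, Nat.sub_self] at h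
            exact eq_neg_of_add_eq_zero_left h
          have hB : ∑ i ∈ Finset.range (l+1), L i (M (k+1+1-(l+1-i)) (k+1+1) (b 0))
              = -(L (l+1) (b 0)) := by
            have h := hgc (l+1) (by omega)
            rw [Finset.sum_range_succ, Nat.sub_self] at h
            rw [hg0] at h
            exact eq_neg_of_add_eq_zero_left h
          rw [hA, hB, sub_self]
        obtain ⟨m, hmmem, hmrep⟩ :=
          (ih (fun x => b (x+1) - M (k+1+1-(x+1)) (k+1+1) (b 0))).mp hchain_h
        refine ⟨fun q => if q = k+1+1 then b 0 else m q, ?_, ?_⟩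
        · intro q hq1 hq2
          by_cases hq : q = k+1+1
          · subst hq
            show (if (k+1+1:ℕ) = k+1+1 then b 0 else m (k+1+1)) ∈ N (k+1+1)
            rw [if_pos rfl]
            exact hb0mem
          · show (if q = k+1+1 then b 0 else m q) ∈ N q
            rw [if_neg hq]
            exact hmmem q hq1 (by omega)
        · intro a ha1 ha2
          rw [Finset.sum_Icc_succ_top (show a ≤ k+1+1 by omega)]
          have hite : ∀ q ∈ Finset.Icc a (k+1),
              M a q (if q = k+1+1 then b 0 else m q) = M a q (m q) := by
            intro q hq
            have hq' := (Finset.mem_Icc.mp hq).2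
            rw [if_neg (by omega)]
          have hlam : (fun q => if q = k+1+1 then b 0 else m q) (k+1+1) = b 0 := if_pos rfl
          rw [Finset.sum_congr rfl hite, hlam]
          by_cases hak : a = k+1+1
          · subst hak
            rw [Finset.Icc_eq_empty (by omega), Finset.sum_empty, zero_add, Nat.sub_self,
              hMdiag (k+1)]
            rfl
          · have h1 : b (k+1-a+1) - M (k+1+1-(k+1-a+1)) (k+1+1) (b 0)
                = ∑ q ∈ Finset.Icc a (k+1), M a q (m q) := hmrep a ha1 (by omega)
            have e1 : k+1-a+1 = k+1+1-a := by omega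
            have e2 : k+1+1-(k+1+1-a) = a := by omega
            rw [e1, e2] at h1
            exact eq_add_of_sub_eq h1
      · -- backward
        rintro ⟨n, hmem, hrep⟩
        have hb0 : b 0 = n (k+1+1) := by
          have h := hrep (k+1+1) (by omega) le_rfl
          rw [Nat.sub_self, Finset.Icc_self, Finset.sum_singleton, hMdiag (k+1)] at h
          exact h
        have hnk2 : n (k+1+1) ∈ N (k+1+1) := hmem (k+1+1) (by omega) le_rfl
        have hgc := hg_chain (k+1) (n (k+1+1)) hnk2
        have hg0 : M (k+1+1-(0:ℕ)) (k+1+1) (n (k+1+1)) = n (k+1+1) := by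
          rw [Nat.sub_zero, hMdiag (k+1)]
          rfl
        have hrep' : ∀ a, 1 ≤ a → a ≤ k+1 →
            (fun x => b (x+1) - M (k+1+1-(x+1)) (k+1+1) (n (k+1+1))) (k+1-a)
              = ∑ q ∈ Finset.Icc a (k+1), M a q (n q) := by
          intro a ha1 ha2
          show b (k+1-a+1) - M (k+1+1-(k+1-a+1)) (k+1+1) (n (k+1+1))
            = ∑ q ∈ Finset.Icc a (k+1), M a q (n q)
          have e1 : k+1-a+1 = k+1+1-a := by omega
          have e2 : k+1+1-(k+1+1-a) = a := by omega
          rw [e1, e2]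
          have h := hrep a ha1 (by omega)
          rw [Finset.sum_Icc_succ_top (show a ≤ k+1+1 by omega)] at h
          rw [h, add_sub_cancel_right]
        have hch : ∀ l, l ≤ k → ∑ i ∈ Finset.range (l+1),
            L i ((fun x => b (x+1) - M (k+1+1-(x+1)) (k+1+1) (n (k+1+1))) (l-i)) = 0 :=
          (ih (fun x => b (x+1) - M (k+1+1-(x+1)) (k+1+1) (n (k+1+1)))).mpr
            ⟨n, fun q h1 h2 => hmem q h1 (by omega), hrep'⟩
        intro l hl
        have hsplitb : ∀ i ∈ Finset.range (l+1), L i (b (l-i))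
            = L i (b (l-i) - M (k+1+1-(l-i)) (k+1+1) (n (k+1+1)))
              + L i (M (k+1+1-(l-i)) (k+1+1) (n (k+1+1))) := by
          intro i hi
          rw [← map_add, sub_add_cancel]
        rw [Finset.sum_congr rfl hsplitb, Finset.sum_add_distrib]
        rw [hgc l hl, add_zero]
        rcases Nat.eq_zero_or_pos l with rfl | hlpos
        · rw [Finset.sum_range_one]
          show L 0 (b 0 - M (k+1+1-(0:ℕ)) (k+1+1) (n (k+1+1))) = 0
          rw [hg0, hb0, sub_self, map_zero]
        · obtain ⟨l', rfl⟩ : ∃ l', l = l'+1 := ⟨l-1, by omega⟩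
          have h := hch l' (by omega)
          rw [Finset.sum_range_succ]
          have hlast : L (l'+1) (b (l'+1-(l'+1))
              - M (k+1+1-(l'+1-(l'+1))) (k+1+1) (n (k+1+1))) = 0 := by
            rw [Nat.sub_self]
            show L (l'+1) (b 0 - M (k+1+1-(0:ℕ)) (k+1+1) (n (k+1+1))) = 0
            rw [hg0, hb0, sub_self, map_zero]
          rw [hlast, add_zero, ← h]
          apply Finset.sum_congr rfl
          intro i hi
          have hi' := Finset.mem_range.mp hi
          show L i (b (l'+1-i) - M (k+1+1-(l'+1-i)) (k+1+1) (n (k+1+1)))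
            = L i (b (l'-i+1) - M (k+1+1-(l'-i+1)) (k+1+1) (n (k+1+1)))
          have e : l'+1-i = l'-i+1 := by omega
          rw [e]
  intro k
  refine ⟨main k, ?_⟩
  intro b0
  constructor
  · rintro ⟨b, hb0, hb⟩
    obtain ⟨n, hmem, hrep⟩ := (main k b).mp hb
    have h := hrep (k+1) (by omega) le_rfl
    rw [Nat.sub_self, Finset.Icc_self, Finset.sum_singleton, hMdiag k] at h
    rw [← hb0, h]
    exact hmem (k+1) (by omega) le_rfl
  · intro hmem
    refine ⟨fun i => M (k+1-i) (k+1) b0, ?_, ?_⟩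
    · show M (k+1-0) (k+1) b0 = b0
      rw [Nat.sub_zero, hMdiag k]
      rfl
    · exact hg_chain k b0 hmem
end

section
/- For every k ≥ 0 and every b_0 ∈ B: rank(b_0) ≥ k if and only if b_0 ∈ N_k. -/
/-
If `x ∈ N_k`, the maps `M_{a,k}` turn `x` into a Jordan chain `j ↦ M_{k-j,k} x` of length `k`.
Through the recursion for `M`, the equations of this chain reduce to those of the chains of
the vectors `E_{b+1,k} x ∈ N_b` with `b < k`, all but the last one; that one holds because `E`
is built so that the partial sums `∑_{v > i} S̄_v E_{v,k} x` lie in `R_1 ⊕ ⋯ ⊕ R_i`.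
Conversely, subtracting from a Jordan chain of length `k + 1` the chain built from its root
leaves a chain with root `0`, whose shift has length `k`. Induction on the length then shows
that `S̄_{k+1} b₀` lies in `R_1 ⊕ ⋯ ⊕ R_k`, so that `S_{k+1} b₀ = 0` and `b₀ ∈ N_{k+1}`.
-/

open Finset

lemma Finset.sum_Icc_add_one {M : Type*} [AddCommMonoid M] (f : ℕ → M) (a b : ℕ) :
    ∑ i ∈ Icc a b, f (i + 1) = ∑ i ∈ Icc (a + 1) (b + 1), f i := by
  rw [← Ico_add_one_right_eq_Icc, ← Ico_add_one_right_eq_Icc, sum_Ico_add']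

lemma Finset.sum_range_succ_eq_add_sum_Icc {M : Type*} [AddCommMonoid M] (f : ℕ → M) (n : ℕ) :
    ∑ i ∈ range (n + 1), f i = f 0 + ∑ i ∈ Icc 1 n, f i := by
  rw [range_eq_Ico, sum_eq_sum_Ico_succ_bot (by omega : 0 < n + 1), zero_add,
    Ico_add_one_right_eq_Icc]

section JordanChain

variable {𝕂 B B' : Type*} [Semiring 𝕂] [AddCommMonoid B] [Module 𝕂 B]
  [AddCommMonoid B'] [Module 𝕂 B']

/-- `b 0, …, b (m - 1)` are the coefficients of a power series `b(ε)` with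
`L(ε) b(ε) = O(ε ^ m)`; the later values of `b` play no role. -/
def IsJordanChain (L : ℕ → B →ₗ[𝕂] B') (m : ℕ) (b : ℕ → B) : Prop :=
  ∀ l, l + 1 ≤ m → ∑ i ∈ range (l + 1), L i (b (l - i)) = 0

noncomputable def jordanRank (L : ℕ → B →ₗ[𝕂] B') (b₀ : B) : ℕ∞ :=
  sSup {x : ℕ∞ | ∃ m : ℕ, 1 ≤ m ∧ (∃ b : ℕ → B, b 0 = b₀ ∧ IsJordanChain L m b) ∧ x = m}

variable {L : ℕ → B →ₗ[𝕂] B'}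

lemma isJordanChain_zero (b : ℕ → B) : IsJordanChain L 0 b :=
  fun l hl => absurd hl (by omega)

lemma IsJordanChain.mono {m n : ℕ} {b : ℕ → B} (h : IsJordanChain L n b) (hmn : m ≤ n) :
    IsJordanChain L m b :=
  fun l hl => h l (hl.trans hmn)

lemma le_jordanRank_iff (k : ℕ) (b₀ : B) :
    (k : ℕ∞) ≤ jordanRank L b₀ ↔ ∃ b : ℕ → B, b 0 = b₀ ∧ IsJordanChain L k b := by
  rcases k.eq_zero_or_pos with rfl | hk
  · simpa using ⟨fun _ => b₀, rfl, isJordanChain_zero _⟩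
  refine ⟨fun hle => ?_, fun ⟨b, hb0, hb⟩ => le_sSup ⟨k, hk, ⟨b, hb0, hb⟩, rfl⟩⟩
  by_contra! h
  have hbound : jordanRank L b₀ ≤ (k - 1 : ℕ) := sSup_le <| by
    rintro _ ⟨m, -, ⟨b, hb0, hb⟩, rfl⟩
    have hmk : m < k := lt_of_not_ge fun hkm => h b hb0 (hb.mono hkm)
    exact_mod_cast (by omega : m ≤ k - 1)
  have : k ≤ k - 1 := by exact_mod_cast hle.trans hbound
  omega

end JordanChain

section JordanChainGroup

variable {𝕂 B B' : Type*} [Semiring 𝕂] [AddCommGroup B] [Module 𝕂 B]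
  [AddCommGroup B'] [Module 𝕂 B'] {L : ℕ → B →ₗ[𝕂] B'} {m : ℕ} {b c : ℕ → B}

lemma IsJordanChain.sub (hb : IsJordanChain L m b) (hc : IsJordanChain L m c) :
    IsJordanChain L m (b - c) := fun l hl => by
  simp only [Pi.sub_apply, map_sub, sum_sub_distrib, hb l hl, hc l hl, sub_zero]

lemma IsJordanChain.shift (hb : IsJordanChain L (m + 1) b) (h0 : b 0 = 0) :
    IsJordanChain L m (fun j => b (j + 1)) := fun l hl => by
  have h := hb (l + 1) (by omega)
  rw [sum_range_succ, Nat.sub_self, h0, map_zero, add_zero] at h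
  rw [← h]
  exact sum_congr rfl fun i hi => by rw [Nat.sub_add_comm (by simpa [Nat.lt_succ_iff] using hi)]

lemma IsJordanChain.sum_Icc_eq_neg {k : ℕ} (hb : IsJordanChain L (k + 1) b) :
    ∑ i ∈ Icc 1 k, L i (b (k - i)) = -L 0 (b k) := by
  have h := hb k le_rfl
  rw [sum_range_succ_eq_add_sum_Icc, Nat.sub_zero] at h
  exact eq_neg_of_add_eq_zero_right h

end JordanChainGroup

/-- `B'`, `Sb`, `Nc`, `Rc`, `P` stand for `B̄`, `S̄`, `Nᶜ`, `Rᶜ`, `𝒫`, and `T i` for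
`S_i⁻¹ ∘ 𝒫_i : B̄ → Nᶜ_i`. -/
structure JordanRecursion (𝕂 B B' : Type*) [Ring 𝕂] [AddCommGroup B] [Module 𝕂 B]
    [AddCommGroup B'] [Module 𝕂 B'] where
  L : ℕ → B →ₗ[𝕂] B'
  Sb : ℕ → B →ₗ[𝕂] B'
  S : ℕ → B →ₗ[𝕂] B'
  N : ℕ → Submodule 𝕂 B
  Nc : ℕ → Submodule 𝕂 B
  R : ℕ → Submodule 𝕂 B'
  Rc : ℕ → Submodule 𝕂 B'
  P : ℕ → B' →ₗ[𝕂] B'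
  T : ℕ → B' →ₗ[𝕂] B
  E : ℕ → ℕ → B →ₗ[𝕂] B
  M : ℕ → ℕ → B →ₗ[𝕂] B
  N_zero : N 0 = ⊤
  Sb_one : Sb 1 = L 0
  Sb_succ : ∀ k, 1 ≤ k → Sb (k + 1) = ∑ i ∈ Icc 1 k, (L i).comp (M i k)
  S_succ : ∀ k, S (k + 1) = Sb (k + 1) - ∑ i ∈ Icc 1 k, (P i).comp (Sb (k + 1))
  N_succ : ∀ k, N (k + 1) = LinearMap.ker (S (k + 1)) ⊓ N k
  R_succ : ∀ k, R (k + 1) = Submodule.map (S (k + 1)) (N k)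
  Nc_sup_N : ∀ k, Nc (k + 1) ⊔ N (k + 1) = N k
  R_sup_Rc : ∀ k, R (k + 1) ⊔ Rc (k + 1) = Rc k
  range_P_le : ∀ i, 1 ≤ i → LinearMap.range (P i) ≤ R i
  P_of_mem_R : ∀ i, 1 ≤ i → ∀ y ∈ R i, P i y = y
  P_of_mem_Rc : ∀ i, 1 ≤ i → ∀ y ∈ Rc i, P i y = 0
  P_of_mem_R_of_lt : ∀ i j, 1 ≤ j → j < i → ∀ y ∈ R j, P i y = 0
  T_mem : ∀ i, 1 ≤ i → ∀ y, T i y ∈ Nc i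
  S_T : ∀ i, 1 ≤ i → ∀ y, S i (T i y) = P i y
  E_self : ∀ k, E (k + 1) (k + 1) = LinearMap.id
  E_of_le : ∀ k i, 1 ≤ i → i ≤ k →
    E i (k + 1) = -((T i).comp (∑ v ∈ Icc (i + 1) (k + 1), (Sb v).comp (E v (k + 1))))
  M_one_one : M 1 1 = LinearMap.id
  M_one : ∀ k, 1 ≤ k → M 1 (k + 1) = E 1 (k + 1)
  M_succ : ∀ k a, 2 ≤ a → a ≤ k + 1 →
    M a (k + 1) = ∑ b ∈ Icc (a - 1) k, (M (a - 1) b).comp (E (b + 1) (k + 1))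

namespace JordanRecursion

variable {𝕂 B B' : Type*} [Ring 𝕂] [AddCommGroup B] [Module 𝕂 B] [AddCommGroup B']
  [Module 𝕂 B'] (J : JordanRecursion 𝕂 B B')

def Psum (k : ℕ) : B' →ₗ[𝕂] B' := ∑ j ∈ Icc 1 k, J.P j

def Rsum (k : ℕ) : Submodule 𝕂 B' := ⨆ m ∈ Icc 1 k, J.R m

lemma N_antitone : Antitone J.N :=
  antitone_nat_of_succ_le fun k => by rw [J.N_succ]; exact inf_le_right

lemma Nc_le_N (k : ℕ) : J.Nc (k + 1) ≤ J.N k :=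
  le_sup_left.trans_eq (J.Nc_sup_N k)

lemma R_le_Rc {j m : ℕ} (h : j < m) : J.R m ≤ J.Rc j := by
  obtain ⟨t, rfl⟩ : ∃ t, m = t + 1 := ⟨m - 1, by omega⟩
  have hRc : Antitone J.Rc :=
    antitone_nat_of_succ_le fun k => le_sup_right.trans_eq (J.R_sup_Rc k)
  calc J.R (t + 1) ≤ J.Rc t := le_sup_left.trans_eq (J.R_sup_Rc t)
    _ ≤ J.Rc j := hRc (by omega)

lemma S_one : J.S 1 = J.L 0 := by simpa [J.Sb_one] using J.S_succ 0

lemma mem_N_one_iff {x : B} : x ∈ J.N 1 ↔ J.L 0 x = 0 := by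
  simp [J.N_succ 0, J.N_zero, J.S_one]

lemma R_one : J.R 1 = LinearMap.range (J.L 0) := by
  rw [J.R_succ, J.N_zero, Submodule.map_top, J.S_one]

lemma M_self (k : ℕ) : J.M (k + 1) (k + 1) = LinearMap.id := by
  induction k with
  | zero => exact J.M_one_one
  | succ k ih => simp [J.M_succ (k + 1) (k + 2) (by omega) le_rfl, ih, J.E_self]

lemma R_le_Rsum {m k : ℕ} (hm : m ∈ Icc 1 k) : J.R m ≤ J.Rsum k :=
  le_iSup₂_of_le m hm le_rfl

lemma Rsum_mono : Monotone J.Rsum := fun _ _ h =>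
  iSup₂_le fun m hm => J.R_le_Rsum (by simp only [mem_Icc] at hm ⊢; omega)

lemma Psum_succ (k : ℕ) : J.Psum (k + 1) = J.Psum k + J.P (k + 1) :=
  sum_Icc_succ_top (by omega) _

lemma Psum_one : J.Psum 1 = J.P 1 := by simp [Psum]

lemma Psum_apply_mem_Rsum (k : ℕ) (y : B') : J.Psum k y ∈ J.Rsum k := by
  rw [Psum, LinearMap.sum_apply]
  exact sum_mem fun j hj => J.R_le_Rsum hj (J.range_P_le j (mem_Icc.1 hj).1 ⟨y, rfl⟩)

/-- `𝒫_1 + ⋯ + 𝒫_k` is the identity on `R_1 ⊕ ⋯ ⊕ R_k`: a projection `𝒫_j` kills `R_m` for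
`j > m` by construction, and for `j < m` because `R_m ⊆ Rᶜ_j`. -/
lemma Psum_apply_of_mem_Rsum {k : ℕ} {y : B'} (hy : y ∈ J.Rsum k) : J.Psum k y = y := by
  suffices J.Rsum k ≤ (J.Psum k).eqLocus LinearMap.id from this hy
  refine iSup₂_le fun m hm z hz => ?_
  obtain ⟨hm1, hmk⟩ := mem_Icc.1 hm
  rw [LinearMap.mem_eqLocus, Psum, LinearMap.sum_apply, LinearMap.id_apply,
    sum_eq_single_of_mem m hm (fun j hj hjm => ?_), J.P_of_mem_R m hm1 z hz]
  rcases Nat.lt_or_gt_of_ne hjm with hlt | hgt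
  · exact J.P_of_mem_Rc j (mem_Icc.1 hj).1 z (J.R_le_Rc hlt hz)
  · exact J.P_of_mem_R_of_lt j m hm1 hgt z hz

lemma S_succ_apply (k : ℕ) (x : B) :
    J.S (k + 1) x = J.Sb (k + 1) x - J.Psum k (J.Sb (k + 1) x) := by
  simp [J.S_succ, Psum, LinearMap.sum_apply]

lemma Sb_succ_apply {k : ℕ} (hk : 1 ≤ k) (x : B) :
    J.Sb (k + 1) x = ∑ i ∈ Icc 1 k, J.L i (J.M i k x) := by
  simp [J.Sb_succ k hk, LinearMap.sum_apply]

lemma mem_N_succ_of_Sb_mem_Rsum {k : ℕ} {x : B} (hx : x ∈ J.N k)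
    (h : J.Sb (k + 1) x ∈ J.Rsum k) : x ∈ J.N (k + 1) := by
  rw [J.N_succ, Submodule.mem_inf, LinearMap.mem_ker, J.S_succ_apply,
    J.Psum_apply_of_mem_Rsum h, sub_self]
  exact ⟨rfl, hx⟩

lemma Psum_Sb_of_mem_N_succ {k : ℕ} {x : B} (hx : x ∈ J.N (k + 1)) :
    J.Psum k (J.Sb (k + 1) x) = J.Sb (k + 1) x := by
  rw [J.N_succ, Submodule.mem_inf, LinearMap.mem_ker, J.S_succ_apply, sub_eq_zero] at hx
  exact hx.1.symm

lemma Sb_mem_Rsum_succ {k : ℕ} {x : B} (hx : x ∈ J.N k) : J.Sb (k + 1) x ∈ J.Rsum (k + 1) := by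
  rw [← sub_add_cancel (J.Sb (k + 1) x) (J.Psum k (J.Sb (k + 1) x)), ← J.S_succ_apply]
  refine add_mem (J.R_le_Rsum (m := k + 1) (by simp) ?_)
    (J.Rsum_mono k.le_succ (J.Psum_apply_mem_Rsum k _))
  rw [J.R_succ]
  exact ⟨x, hx, rfl⟩

lemma E_apply_of_le {k i : ℕ} (hi : 1 ≤ i) (hik : i ≤ k) (x : B) :
    J.E i (k + 1) x = -J.T i (∑ v ∈ Icc (i + 1) (k + 1), J.Sb v (J.E v (k + 1) x)) := by
  simp [J.E_of_le k i hi hik]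

lemma E_apply_mem_N {k b : ℕ} {x : B} (hx : x ∈ J.N k) (hb : b ≤ k) :
    J.E (b + 1) (k + 1) x ∈ J.N b := by
  rcases hb.eq_or_lt with rfl | hlt
  · simpa [J.E_self] using hx
  · rw [J.E_apply_of_le (by omega) hlt]
    exact neg_mem (J.Nc_le_N b (J.T_mem _ (by omega) _))

lemma M_apply_succ {k a : ℕ} (ha : 2 ≤ a) (hak : a ≤ k + 1) (x : B) :
    J.M a (k + 1) x = ∑ b ∈ Icc (a - 1) k, J.M (a - 1) b (J.E (b + 1) (k + 1) x) := by
  simp [J.M_succ k a ha hak, LinearMap.sum_apply]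

lemma sum_L_M_succ_eq_sum_sum {k a : ℕ} (ha : 2 ≤ a) (hak : a ≤ k + 1) (x : B) :
    ∑ i ∈ range (k + 1 - a + 1), J.L i (J.M (a + i) (k + 1) x) =
      ∑ b ∈ Icc (a - 1) k, ∑ i ∈ range (b - (a - 1) + 1),
        J.L i (J.M (a - 1 + i) b (J.E (b + 1) (k + 1) x)) := by
  calc
    _ = ∑ i ∈ range (k + 1 - a + 1), ∑ b ∈ Icc (a - 1 + i) k,
          J.L i (J.M (a - 1 + i) b (J.E (b + 1) (k + 1) x)) := by
      refine sum_congr rfl fun i hi => ?_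
      rw [J.M_apply_succ (by omega) (by simp only [mem_range] at hi; omega), map_sum,
        show a + i - 1 = a - 1 + i by omega]
    _ = _ := sum_comm' fun i b => by simp only [mem_range, mem_Icc]; omega

lemma sum_Sb_E_mem_Rsum {k i : ℕ} {x : B} (hx : x ∈ J.N (k + 1)) (hi : 1 ≤ i) (hik : i ≤ k) :
    ∑ v ∈ Icc (i + 1) (k + 1), J.Sb v (J.E v (k + 1) x) ∈ J.Rsum i := by
  induction hik using Nat.decreasingInduction with
  | self =>
    rw [Icc_self, sum_singleton, J.E_self, LinearMap.id_apply, ← J.Psum_Sb_of_mem_N_succ hx]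
    exact J.Psum_apply_mem_Rsum k _
  | of_succ i hik ih =>
    set W := ∑ v ∈ Icc (i + 1 + 1) (k + 1), J.Sb v (J.E v (k + 1) x)
    set y := J.E (i + 1) (k + 1) x
    have hsplit : ∑ v ∈ Icc (i + 1) (k + 1), J.Sb v (J.E v (k + 1) x) = J.Sb (i + 1) y + W := by
      rw [← insert_Icc_add_one_left_eq_Icc (by omega : i + 1 ≤ k + 1), sum_insert (by simp)]
    -- `S_{i+1} y = -𝒫_{i+1} W` makes up for the term `𝒫_{i+1} W` that `𝒫_1 + ⋯ + 𝒫_i` misses.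
    have hSy : J.S (i + 1) y = -J.P (i + 1) W := by
      have hy : y = -J.T (i + 1) W := J.E_apply_of_le (by omega) hik x
      rw [hy, map_neg, J.S_T _ (by omega)]
    have hPsumSb : J.Psum i (J.Sb (i + 1) y) = J.Sb (i + 1) y + J.P (i + 1) W := by
      linear_combination (norm := abel) J.S_succ_apply i y - hSy
    have hPsumW : J.Psum i W = W - J.P (i + 1) W := by
      rw [eq_sub_iff_add_eq, ← LinearMap.add_apply, ← J.Psum_succ]
      exact J.Psum_apply_of_mem_Rsum (ih (by omega))
    rw [hsplit]
    convert J.Psum_apply_mem_Rsum i (J.Sb (i + 1) y + W) using 1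
    rw [map_add, hPsumSb, hPsumW]
    abel

lemma sum_L_M_one_eq_zero {k : ℕ} (hk : 1 ≤ k) {x : B} (hx : x ∈ J.N (k + 1)) :
    ∑ i ∈ range (k + 1), J.L i (J.M (1 + i) (k + 1) x) = 0 := by
  set W := ∑ v ∈ Icc (1 + 1) (k + 1), J.Sb v (J.E v (k + 1) x)
  have hW : J.P 1 W = W := by
    rw [← J.Psum_one]
    exact J.Psum_apply_of_mem_Rsum (J.sum_Sb_E_mem_Rsum hx le_rfl hk)
  have head : J.L 0 (J.M 1 (k + 1) x) = -J.P 1 W := by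
    rw [J.M_one k hk, J.E_apply_of_le le_rfl hk, map_neg, ← J.S_one, J.S_T 1 le_rfl]
  have tail : ∑ i ∈ Icc 1 k, J.L i (J.M (1 + i) (k + 1) x) = W := by
    calc
      _ = ∑ i ∈ Icc 1 k, ∑ b ∈ Icc i k, J.L i (J.M i b (J.E (b + 1) (k + 1) x)) := by
        refine sum_congr rfl fun i hi => ?_
        rw [mem_Icc] at hi
        rw [J.M_apply_succ (by omega) (by omega), map_sum, Nat.add_sub_cancel_left]
      _ = ∑ b ∈ Icc 1 k, ∑ i ∈ Icc 1 b, J.L i (J.M i b (J.E (b + 1) (k + 1) x)) :=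
        sum_comm' fun i b => by simp only [mem_Icc]; omega
      _ = ∑ b ∈ Icc 1 k, J.Sb (b + 1) (J.E (b + 1) (k + 1) x) :=
        sum_congr rfl fun b hb => (J.Sb_succ_apply (mem_Icc.1 hb).1 _).symm
      _ = W := sum_Icc_add_one (fun v => J.Sb v (J.E v (k + 1) x)) 1 k
  rw [sum_range_succ_eq_add_sum_Icc, tail, add_zero, head, hW, neg_add_cancel]

/-- The equations making `j ↦ M (k - j) k x` a Jordan chain of length `k`, indexed by
`a = k - l` for the equation of order `l`. -/
lemma sum_L_M_eq_zero {k : ℕ} {x : B} (hx : x ∈ J.N k) {a : ℕ} (ha : 1 ≤ a) (hak : a ≤ k) :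
    ∑ i ∈ range (k - a + 1), J.L i (J.M (a + i) k x) = 0 := by
  induction k using Nat.strong_induction_on generalizing x a with
  | _ k ih =>
  obtain ⟨k, rfl⟩ : ∃ k', k = k' + 1 := ⟨k - 1, by omega⟩
  rcases (show a = 1 ∨ 2 ≤ a by omega) with rfl | ha2
  · rcases k.eq_zero_or_pos with rfl | hk
    · simpa [J.M_one_one] using J.mem_N_one_iff.1 hx
    · simpa using J.sum_L_M_one_eq_zero hk hx
  · rw [J.sum_L_M_succ_eq_sum_sum ha2 hak]
    refine sum_eq_zero fun b hb => ?_
    rw [mem_Icc] at hb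
    exact ih b (by omega) (J.E_apply_mem_N (J.N_antitone k.le_succ hx) hb.2) (by omega) hb.1

lemma isJordanChain_M {k : ℕ} {x : B} (hx : x ∈ J.N k) :
    IsJordanChain J.L k (fun j => J.M (k - j) k x) := fun l hl => by
  have h := J.sum_L_M_eq_zero hx (a := k - l) (by omega) (by omega)
  rw [show k - (k - l) + 1 = l + 1 by omega] at h
  rw [← h]
  refine sum_congr rfl fun i hi => ?_
  rw [mem_range] at hi
  simp only [show k - (l - i) = k - l + i by omega]

lemma sum_L_sub_Sb_eq {k : ℕ} (b : ℕ → B) :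
    ∑ i ∈ Icc 1 (k + 1), J.L i (b (k + 1 - i)) - J.Sb (k + 2) (b 0) =
      ∑ i ∈ Icc 1 k, J.L i (b (k + 1 - i) - J.M i (k + 1) (b 0)) := by
  rw [J.Sb_succ_apply (by omega), sum_Icc_succ_top (by omega), sum_Icc_succ_top (by omega),
    J.M_self, LinearMap.id_apply, Nat.sub_self, add_sub_add_right_eq_sub, ← sum_sub_distrib]
  simp only [map_sub]

lemma mem_N_succ_of_isJordanChain {k : ℕ} (hk : 1 ≤ k) {b : ℕ → B}
    (hb : IsJordanChain J.L (k + 1) b)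
    (h : b 0 ∈ J.N k ∧ ∑ i ∈ Icc 1 k, J.L i (b (k - i)) - J.Sb (k + 1) (b 0) ∈ J.Rsum k) :
    b 0 ∈ J.N (k + 1) := by
  refine J.mem_N_succ_of_Sb_mem_Rsum h.1 ?_
  have hL : ∑ i ∈ Icc 1 k, J.L i (b (k - i)) ∈ J.Rsum k := by
    rw [hb.sum_Icc_eq_neg]
    exact neg_mem (J.R_le_Rsum (by simp [hk]) (J.R_one ▸ LinearMap.mem_range_self _ _))
  simpa only [sub_sub_cancel] using sub_mem hL h.2

/-- The second conjunct strengthens the induction: together with the equation of order `k` of a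
chain of length `k + 1`, it puts `S̄_{k+1} (b 0)` into `R_1 ⊕ ⋯ ⊕ R_k`. -/
lemma mem_N_and_sub_Sb_mem_Rsum {k : ℕ} (hk : 1 ≤ k) {b : ℕ → B}
    (hb : IsJordanChain J.L k b) :
    b 0 ∈ J.N k ∧ ∑ i ∈ Icc 1 k, J.L i (b (k - i)) - J.Sb (k + 1) (b 0) ∈ J.Rsum k := by
  induction k, hk using Nat.le_induction generalizing b with
  | base =>
    have h0 : J.L 0 (b 0) = 0 := by simpa using hb 0 le_rfl
    exact ⟨J.mem_N_one_iff.2 h0, by simp [J.Sb_succ_apply le_rfl, J.M_one_one]⟩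
  | succ k hk ih =>
    have h0 := J.mem_N_succ_of_isJordanChain hk hb (ih (hb.mono k.le_succ))
    refine ⟨h0, ?_⟩
    -- `b` minus the chain of its root has root `0`, so its shift `d` has length `k`.
    set d : ℕ → B := fun j => (b - fun j => J.M (k + 1 - j) (k + 1) (b 0)) (j + 1)
    have hd : IsJordanChain J.L k d :=
      (hb.sub (J.isJordanChain_M h0)).shift (by simp [J.M_self])
    obtain ⟨hd0, hdR⟩ := ih hd
    have hdL : ∑ i ∈ Icc 1 k, J.L i (b (k + 1 - i) - J.M i (k + 1) (b 0)) =
        ∑ i ∈ Icc 1 k, J.L i (d (k - i)) := by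
      refine sum_congr rfl fun i hi => ?_
      rw [mem_Icc] at hi
      simp only [d, Pi.sub_apply, show k - i + 1 = k + 1 - i by omega,
        show k + 1 - (k + 1 - i) = i by omega]
    rw [J.sum_L_sub_Sb_eq, hdL, ← sub_add_cancel (∑ i ∈ Icc 1 k, J.L i (d (k - i)))
      (J.Sb (k + 1) (d 0))]
    exact add_mem (J.Rsum_mono k.le_succ hdR) (J.Sb_mem_Rsum_succ hd0)

lemma exists_isJordanChain_iff_mem_N (k : ℕ) (x : B) :
    (∃ b : ℕ → B, b 0 = x ∧ IsJordanChain J.L k b) ↔ x ∈ J.N k := by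
  rcases k.eq_zero_or_pos with rfl | hk
  · simpa [J.N_zero] using ⟨fun _ => x, rfl, isJordanChain_zero _⟩
  refine ⟨fun ⟨b, hb0, hb⟩ => hb0 ▸ (J.mem_N_and_sub_Sb_mem_Rsum hk hb).1, fun hx => ?_⟩
  obtain ⟨k, rfl⟩ : ∃ k', k = k' + 1 := ⟨k - 1, by omega⟩
  exact ⟨_, by simp [J.M_self], J.isJordanChain_M hx⟩

end JordanRecursion

theorem stmt_5_general
    {𝕂 : Type*} [RCLike 𝕂]
    {B B' : Type*} [AddCommGroup B] [Module 𝕂 B]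
    [AddCommGroup B'] [Module 𝕂 B']
    (L : ℕ → B →ₗ[𝕂] B')
    (Sb S : ℕ → B →ₗ[𝕂] B')
    (N Nc : ℕ → Submodule 𝕂 B)
    (R Rc : ℕ → Submodule 𝕂 B')
    (P : ℕ → B' →ₗ[𝕂] B')
    (T : ℕ → B' →ₗ[𝕂] B)
    (E M : ℕ → ℕ → B →ₗ[𝕂] B)
    (hN0 : N 0 = ⊤)
    (hSb1 : Sb 1 = L 0)
    (hSbrec : ∀ k, 1 ≤ k → Sb (k + 1) = ∑ i ∈ Finset.Icc 1 k, (L i).comp (M i k))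
    (hSdef : ∀ k, S (k + 1) = Sb (k + 1) - ∑ i ∈ Finset.Icc 1 k, (P i).comp (Sb (k + 1)))
    (hNdef : ∀ k, N (k + 1) = LinearMap.ker (S (k + 1)) ⊓ N k)
    (hRdef : ∀ k, R (k + 1) = Submodule.map (S (k + 1)) (N k))
    (hNcompl : ∀ k, Disjoint (Nc (k + 1)) (N (k + 1)) ∧ Nc (k + 1) ⊔ N (k + 1) = N k)
    (hRcompl : ∀ k, Disjoint (R (k + 1)) (Rc (k + 1)) ∧ R (k + 1) ⊔ Rc (k + 1) = Rc k)
    (hPrange : ∀ i, 1 ≤ i → LinearMap.range (P i) ≤ R i)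
    (hPid : ∀ i, 1 ≤ i → ∀ y ∈ R i, P i y = y)
    (hPzeroRc : ∀ i, 1 ≤ i → ∀ y ∈ Rc i, P i y = 0)
    (hPzeroR : ∀ i j, 1 ≤ j → j < i → ∀ y ∈ R j, P i y = 0)
    (hTrange : ∀ i, 1 ≤ i → ∀ y, T i y ∈ Nc i)
    (hST : ∀ i, 1 ≤ i → ∀ y, S i (T i y) = P i y)
    (hEdiag : ∀ k, E (k + 1) (k + 1) = LinearMap.id)
    (hErec : ∀ k i, 1 ≤ i → i ≤ k →
      E i (k + 1) = -((T i).comp (∑ v ∈ Finset.Icc (i + 1) (k + 1), (Sb v).comp (E v (k + 1)))))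
    (hM11 : M 1 1 = LinearMap.id)
    (hM1 : ∀ k, 1 ≤ k → M 1 (k + 1) = E 1 (k + 1))
    (hMrec : ∀ k a, 2 ≤ a → a ≤ k + 1 →
      M a (k + 1) = ∑ b ∈ Finset.Icc (a - 1) k, (M (a - 1) b).comp (E (b + 1) (k + 1)))
    (rank : B → ℕ∞)
    (hrank : ∀ b0 : B, rank b0 = sSup {x : ℕ∞ | ∃ m : ℕ, 1 ≤ m ∧
      (∃ b : ℕ → B, b 0 = b0 ∧
        ∀ l, l + 1 ≤ m → ∑ i ∈ Finset.range (l + 1), L i (b (l - i)) = 0) ∧ x = (m : ℕ∞)})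
    :
    ∀ k : ℕ, ∀ b0 : B, (k : ℕ∞) ≤ rank b0 ↔ b0 ∈ N k := by
  let J : JordanRecursion 𝕂 B B' :=
    { L, Sb, S, N, Nc, R, Rc, P, T, E, M
      N_zero := hN0, Sb_one := hSb1, Sb_succ := hSbrec, S_succ := hSdef, N_succ := hNdef
      R_succ := hRdef, Nc_sup_N := fun k => (hNcompl k).2, R_sup_Rc := fun k => (hRcompl k).2
      range_P_le := hPrange, P_of_mem_R := hPid, P_of_mem_Rc := hPzeroRc
      P_of_mem_R_of_lt := hPzeroR, T_mem := hTrange, S_T := hST, E_self := hEdiag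
      E_of_le := hErec, M_one_one := hM11, M_one := hM1, M_succ := hMrec }
  have hrank' : rank = jordanRank L := funext hrank
  intro k b0
  rw [hrank', le_jordanRank_iff]
  exact J.exists_isJordanChain_iff_mem_N k b0

theorem stmt_5
    {𝕂 : Type*} [RCLike 𝕂]
    {B B' : Type*} [AddCommGroup B] [Module 𝕂 B]
    [AddCommGroup B'] [Module 𝕂 B']
    (L : ℕ → B →ₗ[𝕂] B')
    (Sb S : ℕ → B →ₗ[𝕂] B')
    (N Nc : ℕ → Submodule 𝕂 B)
    (R Rc : ℕ → Submodule 𝕂 B')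
    (P : ℕ → B' →ₗ[𝕂] B')
    (T : ℕ → B' →ₗ[𝕂] B)
    (E M : ℕ → ℕ → B →ₗ[𝕂] B)
    (hL : ∃ i, L i ≠ 0)
    (hN0 : N 0 = ⊤) (hRc0 : Rc 0 = ⊤)
    (hSb1 : Sb 1 = L 0)
    (hSbrec : ∀ k, 1 ≤ k → Sb (k + 1) = ∑ i ∈ Finset.Icc 1 k, (L i).comp (M i k))
    (hSdef : ∀ k, S (k + 1) = Sb (k + 1) - ∑ i ∈ Finset.Icc 1 k, (P i).comp (Sb (k + 1)))
    (hNdef : ∀ k, N (k + 1) = LinearMap.ker (S (k + 1)) ⊓ N k)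
    (hRdef : ∀ k, R (k + 1) = Submodule.map (S (k + 1)) (N k))
    (hNcompl : ∀ k, Disjoint (Nc (k + 1)) (N (k + 1)) ∧ Nc (k + 1) ⊔ N (k + 1) = N k)
    (hRcompl : ∀ k, Disjoint (R (k + 1)) (Rc (k + 1)) ∧ R (k + 1) ⊔ Rc (k + 1) = Rc k)
    (hPrange : ∀ i, 1 ≤ i → LinearMap.range (P i) ≤ R i)
    (hPid : ∀ i, 1 ≤ i → ∀ y ∈ R i, P i y = y)
    (hPzeroRc : ∀ i, 1 ≤ i → ∀ y ∈ Rc i, P i y = 0)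
    (hPzeroR : ∀ i j, 1 ≤ j → j < i → ∀ y ∈ R j, P i y = 0)
    (hTrange : ∀ i, 1 ≤ i → ∀ y, T i y ∈ Nc i)
    (hTS : ∀ i, 1 ≤ i → ∀ x ∈ Nc i, T i (S i x) = x)
    (hST : ∀ i, 1 ≤ i → ∀ y, S i (T i y) = P i y)
    (hE11 : E 1 1 = LinearMap.id)
    (hEdiag : ∀ k, E (k + 1) (k + 1) = LinearMap.id)
    (hErec : ∀ k i, 1 ≤ i → i ≤ k →
      E i (k + 1) = -((T i).comp (∑ v ∈ Finset.Icc (i + 1) (k + 1), (Sb v).comp (E v (k + 1)))))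
    (hM11 : M 1 1 = LinearMap.id)
    (hM1 : ∀ k, 1 ≤ k → M 1 (k + 1) = E 1 (k + 1))
    (hMrec : ∀ k a, 2 ≤ a → a ≤ k + 1 →
      M a (k + 1) = ∑ b ∈ Finset.Icc (a - 1) k, (M (a - 1) b).comp (E (b + 1) (k + 1)))
    (rank : B → ℕ∞)
    (hrank : ∀ b0 : B, rank b0 = sSup {x : ℕ∞ | ∃ m : ℕ, 1 ≤ m ∧
      (∃ b : ℕ → B, b 0 = b0 ∧
        ∀ l, l + 1 ≤ m → ∑ i ∈ Finset.range (l + 1), L i (b (l - i)) = 0) ∧ x = (m : ℕ∞)})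
    :
    ∀ k : ℕ, ∀ b0 : B, (k : ℕ∞) ≤ rank b0 ↔ b0 ∈ N k :=
  stmt_5_general L Sb S N Nc R Rc P T E M hN0 hSb1 hSbrec hSdef hNdef hRdef hNcompl hRcompl hPrange
    hPid hPzeroRc hPzeroR hTrange hST hEdiag hErec hM11 hM1 hMrec rank hrank
end
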